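/- arXiv:2111.00335 — 10 statements merged into one kernel-verified Lean document; each statement's English description precedes it below -/
import Mathlib

section
/- Let (Y, V, v⁰; σ, τ) be a distinguished triple and suppose V = W₁ ⊕ W₂ where W₁ and W₂ are Y-invariant and σ-invariant subspaces with τ(W₁, W₂) = 0, the restrictions of τ to W₁ and to W₂ are nondegenerate, and v⁰ ∈ W₁. Then for every natural number h: there exists a special vector w ∈ V with Y^h w = v⁰ if and only if there exists a special vector w₁ ∈ W₁ with Y^h w₁ = v⁰. In particular the distinguished height of the triple (Y, V, v⁰) equals the distinguished height of the triple (Y|W₁, W₁, v⁰). -/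
/-- A vector `w` is *special* for the antilinear map `σ`:  it is nonzero and an
eigenvector of `σ` with eigenvalue `±1` when `σ ∘ σ = id`, resp. `±i` when
`σ ∘ σ = -id`. -/
def IsSpecial {V : Type*} [AddCommGroup V] [Module ℂ V] (σ : V → V) (w : V) : Prop :=
  w ≠ 0 ∧
    ((∀ v : V, σ (σ v) = v) → (σ w = w ∨ σ w = -w)) ∧
    ((∀ v : V, σ (σ v) = -v) → (σ w = Complex.I • w ∨ σ w = -(Complex.I • w)))

/-- Lemma 2.2: if a distinguished triple `(Y, V, v⁰; σ, τ)` decomposes as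
`V = W₁ ⊕ W₂` with `v⁰ ∈ W₁`, then for every `h` there is a special vector `w` of `V`
with `Y^h w = v⁰` iff there is such a special vector inside `W₁`;  in particular the
distinguished heights agree. -/
theorem distinguishedHeight_of_summand
    {V : Type*} [AddCommGroup V] [Module ℂ V] [FiniteDimensional ℂ V]
    (σ : V → V) (Y : Module.End ℂ V) (τ : V →ₗ[ℂ] V →ₗ[ℂ] ℂ) (v0 : V)
    (hσadd : ∀ u v : V, σ (u + v) = σ u + σ v)
    (hσsmul : ∀ (a : ℂ) (v : V), σ (a • v) = (starRingEnd ℂ) a • σ v)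
    (hσbij : Function.Bijective σ)
    (hσinv : (∀ v : V, σ (σ v) = v) ∨ (∀ v : V, σ (σ v) = -v))
    (hτl : ∀ u : V, (∀ v : V, τ u v = 0) → u = 0)
    (hτr : ∀ v : V, (∀ u : V, τ u v = 0) → v = 0)
    (hτsa : (∀ u v : V, τ u v = τ v u) ∨ (∀ u v : V, τ u v = -(τ v u)))
    (hτσ : ∀ u v : V, τ (σ u) (σ v) = (starRingEnd ℂ) (τ u v))
    (hYσ : ∀ v : V, Y (σ v) = σ (Y v))
    (hskew : ∀ u v : V, τ (Y u) v + τ u (Y v) = 0)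
    (hv0 : IsSpecial σ v0) (hτv0 : τ v0 v0 = 0) (hYv0 : Y v0 = 0)
    (W₁ W₂ : Submodule ℂ V)
    (hsup : W₁ ⊔ W₂ = ⊤) (hinf : W₁ ⊓ W₂ = ⊥)
    (hYW₁ : ∀ w ∈ W₁, Y w ∈ W₁) (hYW₂ : ∀ w ∈ W₂, Y w ∈ W₂)
    (hσW₁ : ∀ w ∈ W₁, σ w ∈ W₁) (hσW₂ : ∀ w ∈ W₂, σ w ∈ W₂)
    (horth : ∀ u ∈ W₁, ∀ v ∈ W₂, τ u v = 0 ∧ τ v u = 0)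
    (hnd₁l : ∀ u ∈ W₁, (∀ v ∈ W₁, τ u v = 0) → u = 0)
    (hnd₁r : ∀ v ∈ W₁, (∀ u ∈ W₁, τ u v = 0) → v = 0)
    (hnd₂l : ∀ u ∈ W₂, (∀ v ∈ W₂, τ u v = 0) → u = 0)
    (hnd₂r : ∀ v ∈ W₂, (∀ u ∈ W₂, τ u v = 0) → v = 0)
    (hv0W₁ : v0 ∈ W₁) :
    ∀ h : ℕ, (∃ w : V, IsSpecial σ w ∧ (Y ^ h) w = v0) ↔
      (∃ w ∈ W₁, IsSpecial σ w ∧ (Y ^ h) w = v0) := by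
  -- uniqueness of decomposition
  have uniq : ∀ a₁ ∈ W₁, ∀ a₂ ∈ W₂, ∀ b₁ ∈ W₁, ∀ b₂ ∈ W₂,
      a₁ + a₂ = b₁ + b₂ → a₁ = b₁ ∧ a₂ = b₂ := by
    intro a₁ ha₁ a₂ ha₂ b₁ hb₁ b₂ hb₂ heq
    have hm1 : a₁ - b₁ ∈ W₁ := sub_mem ha₁ hb₁
    have hm2 : a₁ - b₁ ∈ W₂ := by
      have h' : a₁ - b₁ = b₂ - a₂ := by
        rw [sub_eq_sub_iff_add_eq_add, heq, add_comm]
      rw [h']; exact sub_mem hb₂ ha₂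
    have hz : a₁ - b₁ = 0 := by
      have : a₁ - b₁ ∈ W₁ ⊓ W₂ := Submodule.mem_inf.mpr ⟨hm1, hm2⟩
      rw [hinf] at this; simpa using this
    have hab : a₁ = b₁ := sub_eq_zero.mp hz
    refine ⟨hab, ?_⟩
    rw [hab] at heq
    exact add_left_cancel heq
  -- Y^n invariance
  have hYn₁ : ∀ (n : ℕ) (w : V), w ∈ W₁ → (Y ^ n) w ∈ W₁ := by
    intro n
    induction n with
    | zero => intro w hw; simpa using hw
    | succ n ih =>
      intro w hw
      rw [pow_succ, Module.End.mul_apply]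
      exact ih (Y w) (hYW₁ w hw)
  have hYn₂ : ∀ (n : ℕ) (w : V), w ∈ W₂ → (Y ^ n) w ∈ W₂ := by
    intro n
    induction n with
    | zero => intro w hw; simpa using hw
    | succ n ih =>
      intro w hw
      rw [pow_succ, Module.End.mul_apply]
      exact ih (Y w) (hYW₂ w hw)
  have hv0ne : v0 ≠ 0 := hv0.1
  intro h
  constructor
  · rintro ⟨w, ⟨hwne, hwp, hwn⟩, hwy⟩
    have hw : w ∈ W₁ ⊔ W₂ := by rw [hsup]; exact Submodule.mem_top
    rcases Submodule.mem_sup.mp hw with ⟨w₁, h1, w₂, h2, rfl⟩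
    -- Y^h w₁ = v0
    have hmap : (Y ^ h) w₁ + (Y ^ h) w₂ = v0 + 0 := by
      rw [add_zero, ← hwy, map_add]
    obtain ⟨hY1, hY2⟩ := uniq _ (hYn₁ h w₁ h1) _ (hYn₂ h w₂ h2) _ hv0W₁ _ (Submodule.zero_mem W₂) hmap
    have hw₁ne : w₁ ≠ 0 := by
      rintro rfl
      exact hv0ne (by simpa using hY1.symm)
    refine ⟨w₁, h1, ⟨hw₁ne, ?_, ?_⟩, hY1⟩
    · intro hpos
      rcases hwp hpos with hσw | hσw
      · left
        have : σ w₁ + σ w₂ = w₁ + w₂ := by rw [← hσadd]; exact hσw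
        exact (uniq _ (hσW₁ w₁ h1) _ (hσW₂ w₂ h2) _ h1 _ h2 this).1
      · right
        have : σ w₁ + σ w₂ = -w₁ + -w₂ := by
          rw [← hσadd, hσw, neg_add]
        exact (uniq _ (hσW₁ w₁ h1) _ (hσW₂ w₂ h2) _ (neg_mem h1) _ (neg_mem h2) this).1
    · intro hneg
      rcases hwn hneg with hσw | hσw
      · left
        have : σ w₁ + σ w₂ = Complex.I • w₁ + Complex.I • w₂ := by
          rw [← hσadd, hσw, smul_add]
        exact (uniq _ (hσW₁ w₁ h1) _ (hσW₂ w₂ h2) _ (Submodule.smul_mem _ _ h1)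
          _ (Submodule.smul_mem _ _ h2) this).1
      · right
        have : σ w₁ + σ w₂ = -(Complex.I • w₁) + -(Complex.I • w₂) := by
          rw [← hσadd, hσw, smul_add, neg_add]
        exact (uniq _ (hσW₁ w₁ h1) _ (hσW₂ w₂ h2) _ (neg_mem (Submodule.smul_mem _ _ h1))
          _ (neg_mem (Submodule.smul_mem _ _ h2)) this).1
  · rintro ⟨w, _, hsp, hy⟩
    exact ⟨w, hsp, hy⟩
end

section
/- Let V be a finite-dimensional complex vector space, σ : V → V an antilinear bijection with σ∘σ = ±id_V, and Y : V → V a ℂ-linear map with Y∘σ = σ∘Y. Let v⁰ ∈ V be a special vector with Yv⁰ = 0, and suppose V = W₁ ⊕ W₂ where W₁, W₂ are Y-invariant and σ-invariant subspaces with v⁰ ∈ W₁. Let h be a natural number such that there is a special vector w ∈ V with Y^h w = v⁰. Then { λ ∈ ℂ, λ ≠ 0 : λ·Y^h w = v⁰ for some special vector w ∈ V } = { λ ∈ ℂ, λ ≠ 0 : λ·Y^h w₁ = v⁰ for some special vector w₁ ∈ W₁ }. -/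
/-- Lemma 2.3, general linear case: the set of nonzero parameters `λ` with
`λ • Y^h w = v⁰` for some special vector `w` is unchanged when one passes from `V` to
the summand `W₁` containing `v⁰`. -/
theorem parameterSet_of_summand_gl
    {V : Type*} [AddCommGroup V] [Module ℂ V] [FiniteDimensional ℂ V]
    (σ : V → V) (Y : Module.End ℂ V) (v0 : V)
    (hσadd : ∀ u v : V, σ (u + v) = σ u + σ v)
    (hσsmul : ∀ (a : ℂ) (v : V), σ (a • v) = (starRingEnd ℂ) a • σ v)
    (hσbij : Function.Bijective σ)
    (hσinv : (∀ v : V, σ (σ v) = v) ∨ (∀ v : V, σ (σ v) = -v))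
    (hYσ : ∀ v : V, Y (σ v) = σ (Y v))
    (hv0 : IsSpecial σ v0) (hYv0 : Y v0 = 0)
    (W₁ W₂ : Submodule ℂ V)
    (hsup : W₁ ⊔ W₂ = ⊤) (hinf : W₁ ⊓ W₂ = ⊥)
    (hYW₁ : ∀ w ∈ W₁, Y w ∈ W₁) (hYW₂ : ∀ w ∈ W₂, Y w ∈ W₂)
    (hσW₁ : ∀ w ∈ W₁, σ w ∈ W₁) (hσW₂ : ∀ w ∈ W₂, σ w ∈ W₂)
    (hv0W₁ : v0 ∈ W₁)
    (h : ℕ) (hh : ∃ w : V, IsSpecial σ w ∧ (Y ^ h) w = v0) :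
    {l : ℂ | l ≠ 0 ∧ ∃ w : V, IsSpecial σ w ∧ l • (Y ^ h) w = v0} =
      {l : ℂ | l ≠ 0 ∧ ∃ w ∈ W₁, IsSpecial σ w ∧ l • (Y ^ h) w = v0} := by
  have uniq : ∀ a₁ ∈ W₁, ∀ a₂ ∈ W₂, ∀ b₁ ∈ W₁, ∀ b₂ ∈ W₂,
      a₁ + a₂ = b₁ + b₂ → a₁ = b₁ := by
    intro a₁ ha₁ a₂ ha₂ b₁ hb₁ b₂ hb₂ hsum
    have h1 : a₁ - b₁ = b₂ - a₂ := by
      rw [sub_eq_sub_iff_add_eq_add, hsum, add_comm]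
    have hmem : a₁ - b₁ ∈ W₁ ⊓ W₂ := ⟨W₁.sub_mem ha₁ hb₁, h1 ▸ W₂.sub_mem hb₂ ha₂⟩
    rw [hinf, Submodule.mem_bot] at hmem
    exact sub_eq_zero.mp hmem
  have hYpow₁ : ∀ (n : ℕ) (x : V), x ∈ W₁ → (Y ^ n) x ∈ W₁ := by
    intro n
    induction n with
    | zero => intro x hx; simpa using hx
    | succ n ih =>
        intro x hx
        rw [pow_succ, Module.End.mul_apply]
        exact ih _ (hYW₁ x hx)
  have hYpow₂ : ∀ (n : ℕ) (x : V), x ∈ W₂ → (Y ^ n) x ∈ W₂ := by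
    intro n
    induction n with
    | zero => intro x hx; simpa using hx
    | succ n ih =>
        intro x hx
        rw [pow_succ, Module.End.mul_apply]
        exact ih _ (hYW₂ x hx)
  ext l
  simp only [Set.mem_setOf_eq]
  constructor
  · rintro ⟨hl, w, hspec, hlw⟩
    obtain ⟨hw0, hwid, hwneg⟩ := hspec
    have hwtop : w ∈ W₁ ⊔ W₂ := by rw [hsup]; trivial
    obtain ⟨w₁, hw₁, w₂, hw₂, hw⟩ := Submodule.mem_sup.mp hwtop
    have hdec : l • (Y ^ h) w₁ + l • (Y ^ h) w₂ = v0 + 0 := by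
      rw [add_zero, ← smul_add, ← map_add, hw, hlw]
    have h1 : l • (Y ^ h) w₁ = v0 :=
      uniq _ (W₁.smul_mem l (hYpow₁ h w₁ hw₁)) _ (W₂.smul_mem l (hYpow₂ h w₂ hw₂))
        _ hv0W₁ _ W₂.zero_mem hdec
    have hσdec : σ w = σ w₁ + σ w₂ := by rw [← hw, hσadd]
    refine ⟨hl, w₁, hw₁, ⟨?_, ?_, ?_⟩, h1⟩
    · intro h0
      apply hv0.1
      rw [← h1, h0]
      simp
    · intro hid
      rcases hwid hid with h' | h'
      · exact Or.inl (uniq _ (hσW₁ _ hw₁) _ (hσW₂ _ hw₂) _ hw₁ _ hw₂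
          (by rw [← hσdec, h', ← hw]))
      · exact Or.inr (uniq _ (hσW₁ _ hw₁) _ (hσW₂ _ hw₂) _ (W₁.neg_mem hw₁) _ (W₂.neg_mem hw₂)
          (by rw [← hσdec, h', ← hw]; abel))
    · intro hnid
      rcases hwneg hnid with h' | h'
      · exact Or.inl (uniq _ (hσW₁ _ hw₁) _ (hσW₂ _ hw₂)
          _ (W₁.smul_mem _ hw₁) _ (W₂.smul_mem _ hw₂)
          (by rw [← hσdec, h', ← hw, smul_add]))
      · exact Or.inr (uniq _ (hσW₁ _ hw₁) _ (hσW₂ _ hw₂)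
          _ (W₁.neg_mem (W₁.smul_mem _ hw₁)) _ (W₂.neg_mem (W₂.smul_mem _ hw₂))
          (by rw [← hσdec, h', ← hw, smul_add]; abel))
  · rintro ⟨hl, w, hwW₁, hspec, hlw⟩
    exact ⟨hl, w, hspec, hlw⟩
end

section
/- Let (Y, V, v⁰; σ, τ) be a distinguished triple of distinguished height h, and suppose V = W₁ ⊕ W₂ where W₁, W₂ are Y-invariant and σ-invariant subspaces with τ(W₁, W₂) = 0, the restrictions of τ to W₁ and to W₂ nondegenerate, and v⁰ ∈ W₁. Then the parameter sets coincide: { τ(w, v⁰) : w a special vector in V with Y^h w = v⁰ } = { τ(w₁, v⁰) : w₁ a special vector in W₁ with Y^h w₁ = v⁰ }. -/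
/-- Lemma 2.3: the parameter set `{τ(w, v⁰) : w special, Y^h w = v⁰}` of a
distinguished triple is unchanged when one passes from `V` to the summand `W₁`
containing `v⁰`. -/
theorem parameterSet_of_summand
    {V : Type*} [AddCommGroup V] [Module ℂ V] [FiniteDimensional ℂ V]
    (σ : V → V) (Y : Module.End ℂ V) (τ : V →ₗ[ℂ] V →ₗ[ℂ] ℂ) (v0 : V)
    (hσadd : ∀ u v : V, σ (u + v) = σ u + σ v)
    (hσsmul : ∀ (a : ℂ) (v : V), σ (a • v) = (starRingEnd ℂ) a • σ v)
    (hσbij : Function.Bijective σ)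
    (hσinv : (∀ v : V, σ (σ v) = v) ∨ (∀ v : V, σ (σ v) = -v))
    (hτl : ∀ u : V, (∀ v : V, τ u v = 0) → u = 0)
    (hτr : ∀ v : V, (∀ u : V, τ u v = 0) → v = 0)
    (hτsa : (∀ u v : V, τ u v = τ v u) ∨ (∀ u v : V, τ u v = -(τ v u)))
    (hτσ : ∀ u v : V, τ (σ u) (σ v) = (starRingEnd ℂ) (τ u v))
    (hYσ : ∀ v : V, Y (σ v) = σ (Y v))
    (hskew : ∀ u v : V, τ (Y u) v + τ u (Y v) = 0)
    (hv0 : IsSpecial σ v0) (hτv0 : τ v0 v0 = 0) (hYv0 : Y v0 = 0)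
    (W₁ W₂ : Submodule ℂ V)
    (hsup : W₁ ⊔ W₂ = ⊤) (hinf : W₁ ⊓ W₂ = ⊥)
    (hYW₁ : ∀ w ∈ W₁, Y w ∈ W₁) (hYW₂ : ∀ w ∈ W₂, Y w ∈ W₂)
    (hσW₁ : ∀ w ∈ W₁, σ w ∈ W₁) (hσW₂ : ∀ w ∈ W₂, σ w ∈ W₂)
    (horth : ∀ u ∈ W₁, ∀ v ∈ W₂, τ u v = 0 ∧ τ v u = 0)
    (hnd₁l : ∀ u ∈ W₁, (∀ v ∈ W₁, τ u v = 0) → u = 0)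
    (hnd₁r : ∀ v ∈ W₁, (∀ u ∈ W₁, τ u v = 0) → v = 0)
    (hnd₂l : ∀ u ∈ W₂, (∀ v ∈ W₂, τ u v = 0) → u = 0)
    (hnd₂r : ∀ v ∈ W₂, (∀ u ∈ W₂, τ u v = 0) → v = 0)
    (hv0W₁ : v0 ∈ W₁)
    (h : ℕ) (hh : ∃ w : V, IsSpecial σ w ∧ (Y ^ h) w = v0) :
    {c : ℂ | ∃ w : V, IsSpecial σ w ∧ (Y ^ h) w = v0 ∧ τ w v0 = c} =
      {c : ℂ | ∃ w ∈ W₁, IsSpecial σ w ∧ (Y ^ h) w = v0 ∧ τ w v0 = c} := by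
  have huniq : ∀ a ∈ W₁, ∀ b ∈ W₂, a + b = 0 → a = 0 ∧ b = 0 := by
    intro a ha b hb hab
    have hba : a = -b := by rw [eq_neg_iff_add_eq_zero]; exact hab
    have haW₂ : a ∈ W₂ := hba ▸ W₂.neg_mem hb
    have ha0 : a = 0 := by
      have : a ∈ W₁ ⊓ W₂ := ⟨ha, haW₂⟩
      simpa [hinf] using this
    exact ⟨ha0, by rw [ha0, zero_add] at hab; exact hab⟩
  have hYpow₁ : ∀ (n : ℕ) (x : V), x ∈ W₁ → (Y ^ n) x ∈ W₁ := by
    intro n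
    induction n with
    | zero => intro x hx; simpa using hx
    | succ n ih =>
      intro x hx
      rw [pow_succ, Module.End.mul_apply]
      exact ih _ (hYW₁ x hx)
  have hYpow₂ : ∀ (n : ℕ) (x : V), x ∈ W₂ → (Y ^ n) x ∈ W₂ := by
    intro n
    induction n with
    | zero => intro x hx; simpa using hx
    | succ n ih =>
      intro x hx
      rw [pow_succ, Module.End.mul_apply]
      exact ih _ (hYW₂ x hx)
  ext c
  simp only [Set.mem_setOf_eq]
  constructor
  · rintro ⟨w, hw, hYw, hτw⟩
    have hwmem : w ∈ W₁ ⊔ W₂ := by rw [hsup]; trivial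
    obtain ⟨w₁, hw₁, w₂, hw₂, hsum⟩ := Submodule.mem_sup.mp hwmem
    -- Y^h w₂ = 0 and Y^h w₁ = v0
    have hYsplit : (Y ^ h) w₁ + (Y ^ h) w₂ = v0 := by
      rw [← map_add, hsum, hYw]
    have hYw₁ : (Y ^ h) w₁ = v0 ∧ (Y ^ h) w₂ = 0 := by
      have := huniq ((Y ^ h) w₁ - v0) (W₁.sub_mem (hYpow₁ h w₁ hw₁) hv0W₁)
        ((Y ^ h) w₂) (hYpow₂ h w₂ hw₂) (by rw [sub_add_eq_add_sub, hYsplit, sub_self])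
      exact ⟨by rw [sub_eq_zero] at this; exact this.1, this.2⟩
    -- w₁ ≠ 0
    have hw₁ne : w₁ ≠ 0 := by
      intro h0
      apply hv0.1
      rw [← hYw₁.1, h0, map_zero]
    -- eigenvector splitting
    have heig : ∀ lam : ℂ, σ w = lam • w → σ w₁ = lam • w₁ := by
      intro lam hl
      have hsplit : (σ w₁ - lam • w₁) + (σ w₂ - lam • w₂) = 0 := by
        have : σ w₁ + σ w₂ = lam • w₁ + lam • w₂ := by
          rw [← hσadd, hsum, hl, ← hsum, smul_add]
        rw [sub_add_sub_comm, this, sub_self]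
      have := huniq _ (W₁.sub_mem (hσW₁ w₁ hw₁) (W₁.smul_mem lam hw₁))
        _ (W₂.sub_mem (hσW₂ w₂ hw₂) (W₂.smul_mem lam hw₂)) hsplit
      rw [← sub_eq_zero]
      exact this.1
    have hspec : IsSpecial σ w₁ := by
      refine ⟨hw₁ne, ?_, ?_⟩
      · intro hid
        rcases hw.2.1 hid with h1 | h1
        · left; simpa using heig 1 (by simpa using h1)
        · right
          have := heig (-1) (by rw [neg_one_smul]; exact h1)
          simpa using this
      · intro hid
        rcases hw.2.2 hid with h1 | h1
        · left; exact heig Complex.I h1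
        · right
          have := heig (-Complex.I) (by rw [neg_smul]; exact h1)
          simpa using this
    refine ⟨w₁, hw₁, hspec, hYw₁.1, ?_⟩
    have : τ w v0 = τ w₁ v0 + τ w₂ v0 := by
      rw [← hsum, map_add]; simp
    rw [← hτw, this, (horth v0 hv0W₁ w₂ hw₂).2, add_zero]
  · rintro ⟨w, hwW, hw, hYw, hτw⟩
    exact ⟨w, hw, hYw, hτw⟩
end

section
/- Let (Y, V, v⁰; σ, τ) be a distinguished triple. Then there exist subspaces W₁ and W₂ of V such that: V = W₁ ⊕ W₂; W₁ and W₂ are Y-invariant and σ-invariant; τ(W₁, W₂) = 0 and the restrictions of τ to W₁ and to W₂ are nondegenerate (W₂ may be the zero subspace); v⁰ ∈ W₁; the restriction of Y to W₁ is nilpotent; and the distinguished triple (Y|W₁, W₁, v⁰; σ|W₁, τ|W₁) is indecomposable. -/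
open LinearMap (ker range)
open LinearMap.BilinForm

section Separating

variable {R M : Type*} [CommSemiring R] [AddCommMonoid M] [Module R M]

def SeparatingLeftOn (B : LinearMap.BilinForm R M) (W : Submodule R M) : Prop :=
  ∀ u ∈ W, (∀ v ∈ W, B u v = 0) → u = 0

theorem separatingLeftOn_of_sup_eq_top {B : LinearMap.BilinForm R M} (hB : B.SeparatingLeft)
    {W W' : Submodule R M} (hsup : W ⊔ W' = ⊤) (horth : ∀ u ∈ W, ∀ v ∈ W', B u v = 0) :
    SeparatingLeftOn B W := by
  intro u hu hW
  refine hB u fun v ↦ ?_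
  obtain ⟨a, ha, b, hb, rfl⟩ := Submodule.mem_sup.mp (hsup ▸ Submodule.mem_top : v ∈ W ⊔ W')
  rw [map_add, hW a ha, horth u hu b hb, add_zero]

end Separating

section CommRing

variable {R M : Type*} [CommRing R] [AddCommGroup M] [Module R M] {B : LinearMap.BilinForm R M}

theorem isSkewAdjoint_of_add_eq_zero {Y : Module.End R M}
    (hY : ∀ u v, B (Y u) v + B u (Y v) = 0) : B.IsSkewAdjoint Y := fun u v ↦ by
  simpa [eq_neg_iff_add_eq_zero] using hY u v

theorem LinearMap.IsSkewAdjoint.apply_pow_left {Y : Module.End R M} (hY : B.IsSkewAdjoint Y)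
    (m : ℕ) (u v : M) : B ((Y ^ m) u) v = (-1) ^ m * B u ((Y ^ m) v) := by
  induction m generalizing u with
  | zero => simp
  | succ m ih =>
    have hYv : B (Y u) ((Y ^ m) v) = -B u ((Y ^ (m + 1)) v) := by
      rw [hY, pow_succ', Module.End.mul_apply, Pi.neg_apply, map_neg]
    calc B ((Y ^ (m + 1)) u) v = B ((Y ^ m) (Y u)) v := by rw [pow_succ, Module.End.mul_apply]
      _ = (-1) ^ m * B (Y u) ((Y ^ m) v) := ih _
      _ = (-1) ^ (m + 1) * B u ((Y ^ (m + 1)) v) := by rw [hYv]; ring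

theorem LinearMap.IsSkewAdjoint.apply_eq_zero_of_mem_ker_pow_of_mem_range_pow
    {Y : Module.End R M} (hY : B.IsSkewAdjoint Y) {m : ℕ} {u v : M} (hu : u ∈ ker (Y ^ m))
    (hv : v ∈ range (Y ^ m)) :
    B u v = 0 ∧ B v u = 0 := by
  obtain ⟨w, rfl⟩ := hv
  have hYu : (Y ^ m) u = 0 := hu
  have hwu := hY.apply_pow_left m w u
  rw [hYu, map_zero] at hwu
  refine ⟨?_, by simpa using hwu⟩
  have huw := hY.apply_pow_left m u w
  rw [hYu, map_zero, LinearMap.zero_apply] at huw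
  exact (isUnit_neg_one.pow m).mul_right_eq_zero.mp huw.symm

theorem LinearMap.IsSkewAdjoint.mapsTo_orthogonal {Y : Module.End R M} (hY : B.IsSkewAdjoint Y)
    {W : Submodule R M} (hW : ∀ w ∈ W, Y w ∈ W) :
    ∀ w ∈ B.orthogonal W, Y w ∈ B.orthogonal W := by
  intro w hw u hu
  have h := hY u w
  rw [hw (Y u) (hW u hu), Pi.neg_apply, map_neg, zero_eq_neg] at h
  exact h

theorem isRefl_of_symm_or_antisymm
    (hB : (∀ u v, B u v = B v u) ∨ (∀ u v, B u v = -B v u)) : B.IsRefl := by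
  intro u v huv
  rcases hB with h | h <;> simp [h v u, huv]

theorem mapsTo_orthogonal_of_conj [StarRing R] {σ : M → M}
    (hBσ : ∀ u v, B (σ u) (σ v) = starRingEnd R (B u v))
    (hσσ : ∀ u, σ (σ u) = u ∨ σ (σ u) = -u) {W : Submodule R M} (hW : ∀ w ∈ W, σ w ∈ W) :
    ∀ w ∈ B.orthogonal W, σ w ∈ B.orthogonal W := by
  intro w hw u hu
  -- `u = ± σ (σ u)` with `σ u ∈ W`
  have h : B (σ (σ u)) (σ w) = 0 := by rw [hBσ, hw _ (hW u hu), map_zero]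
  rcases hσσ u with hu' | hu' <;> simpa [hu'] using h

end CommRing

section Field

variable {K V : Type*} [Field K] [AddCommGroup V] [Module K V]

structure IsNondegInvariant (σ : V → V) (Y : Module.End K V) (B : LinearMap.BilinForm K V)
    (W : Submodule K V) : Prop where
  mapsTo_Y : ∀ w ∈ W, Y w ∈ W
  mapsTo_σ : ∀ w ∈ W, σ w ∈ W
  separatingLeft : SeparatingLeftOn B W
  separatingRight : SeparatingLeftOn B.flip W

variable {σ : V → V} {Y : Module.End K V} {B : LinearMap.BilinForm K V}

theorem isNondegInvariant_ker_pow (hσ0 : σ 0 = 0) (hYσ : Function.Commute Y σ)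
    (hY : B.IsSkewAdjoint Y) (hBl : B.SeparatingLeft) (hBr : B.SeparatingRight) {n : ℕ}
    (hFit : IsCompl (ker (Y ^ n)) (range (Y ^ n))) :
    IsNondegInvariant σ Y B (ker (Y ^ n)) where
  mapsTo_Y w hw := by
    change (Y ^ n) (Y w) = 0
    rw [← Module.End.mul_apply, ← (Commute.self_pow Y n).eq, Module.End.mul_apply,
      LinearMap.mem_ker.mp hw, map_zero]
  mapsTo_σ w hw := by
    change (Y ^ n) (σ w) = 0
    rw [Module.End.coe_pow, (hYσ.iterate_left n) w, ← Module.End.coe_pow,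
      LinearMap.mem_ker.mp hw, hσ0]
  separatingLeft := separatingLeftOn_of_sup_eq_top hBl hFit.sup_eq_top fun _ hu _ hv ↦
    (hY.apply_eq_zero_of_mem_ker_pow_of_mem_range_pow hu hv).1
  separatingRight :=
    separatingLeftOn_of_sup_eq_top (LinearMap.flip_separatingLeft.mpr hBr) hFit.sup_eq_top
      fun _ hu _ hv ↦ (hY.apply_eq_zero_of_mem_ker_pow_of_mem_range_pow hu hv).2

theorem IsNondegInvariant.isCompl_orthogonal [FiniteDimensional K V] {W : Submodule K V}
    (hW : IsNondegInvariant σ Y B W) (hB : B.IsRefl) : IsCompl W (B.orthogonal W) :=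
  (isCompl_orthogonal_iff_disjoint hB).mpr <| Submodule.disjoint_def.mpr fun x hx hx' ↦
    hW.separatingRight x hx hx'

theorem IsNondegInvariant.orthogonal [StarRing K] [FiniteDimensional K V] {W : Submodule K V}
    (hW : IsNondegInvariant σ Y B W) (hB : B.IsRefl) (hBl : B.SeparatingLeft)
    (hBr : B.SeparatingRight) (hY : B.IsSkewAdjoint Y)
    (hBσ : ∀ u v, B (σ u) (σ v) = starRingEnd K (B u v))
    (hσσ : ∀ u, σ (σ u) = u ∨ σ (σ u) = -u) :
    IsNondegInvariant σ Y B (B.orthogonal W) where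
  mapsTo_Y := hY.mapsTo_orthogonal hW.mapsTo_Y
  mapsTo_σ := mapsTo_orthogonal_of_conj hBσ hσσ hW.mapsTo_σ
  separatingLeft := separatingLeftOn_of_sup_eq_top hBl (hW.isCompl_orthogonal hB).symm.sup_eq_top
    fun _ hu _ hv ↦ hB _ _ (hu _ hv)
  separatingRight :=
    separatingLeftOn_of_sup_eq_top (LinearMap.flip_separatingLeft.mpr hBr)
      (hW.isCompl_orthogonal hB).symm.sup_eq_top fun _ hu _ hv ↦ hu _ hv

end Field

theorem exists_indecomposable_nilpotent_summand_general
    {V : Type*} [AddCommGroup V] [Module ℂ V] [FiniteDimensional ℂ V]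
    (σ : V → V) (Y : Module.End ℂ V) (τ : V →ₗ[ℂ] V →ₗ[ℂ] ℂ) (v0 : V)
    (hσadd : ∀ u v : V, σ (u + v) = σ u + σ v)
    (hσinv : (∀ v : V, σ (σ v) = v) ∨ (∀ v : V, σ (σ v) = -v))
    (hτl : ∀ u : V, (∀ v : V, τ u v = 0) → u = 0)
    (hτr : ∀ v : V, (∀ u : V, τ u v = 0) → v = 0)
    (hτsa : (∀ u v : V, τ u v = τ v u) ∨ (∀ u v : V, τ u v = -(τ v u)))
    (hτσ : ∀ u v : V, τ (σ u) (σ v) = (starRingEnd ℂ) (τ u v))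
    (hYσ : ∀ v : V, Y (σ v) = σ (Y v))
    (hskew : ∀ u v : V, τ (Y u) v + τ u (Y v) = 0)
    (hYv0 : Y v0 = 0) :
    ∃ W₁ W₂ : Submodule ℂ V,
      W₁ ⊔ W₂ = ⊤ ∧ W₁ ⊓ W₂ = ⊥ ∧
      (∀ w ∈ W₁, Y w ∈ W₁) ∧ (∀ w ∈ W₂, Y w ∈ W₂) ∧
      (∀ w ∈ W₁, σ w ∈ W₁) ∧ (∀ w ∈ W₂, σ w ∈ W₂) ∧
      (∀ u ∈ W₁, ∀ v ∈ W₂, τ u v = 0 ∧ τ v u = 0) ∧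
      (∀ u ∈ W₁, (∀ v ∈ W₁, τ u v = 0) → u = 0) ∧
      (∀ v ∈ W₁, (∀ u ∈ W₁, τ u v = 0) → v = 0) ∧
      (∀ u ∈ W₂, (∀ v ∈ W₂, τ u v = 0) → u = 0) ∧
      (∀ v ∈ W₂, (∀ u ∈ W₂, τ u v = 0) → v = 0) ∧
      v0 ∈ W₁ ∧
      (∃ n : ℕ, ∀ w ∈ W₁, (Y ^ n) w = 0) ∧
      (∀ W' : Submodule ℂ V, W' ≤ W₁ →
        (∀ w ∈ W', Y w ∈ W') → (∀ w ∈ W', σ w ∈ W') → v0 ∈ W' →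
        (∀ u ∈ W', (∀ v ∈ W', τ u v = 0) → u = 0) →
        (∀ v ∈ W', (∀ u ∈ W', τ u v = 0) → v = 0) →
        W' = W₁) := by
  have hY := isSkewAdjoint_of_add_eq_zero hskew
  have hrefl := isRefl_of_symm_or_antisymm hτsa
  have hσσ : ∀ u, σ (σ u) = u ∨ σ (σ u) = -u := fun u ↦ hσinv.imp (· u) (· u)
  have hσ0 : σ 0 = 0 := by simpa using hσadd 0 0
  obtain ⟨n, hFit, hn⟩ :=
    (Y.eventually_isCompl_ker_pow_range_pow.and (Filter.eventually_ge_atTop 1)).exists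
  have hv0 : v0 ∈ ker (Y ^ n) := by
    obtain ⟨m, rfl⟩ := Nat.exists_eq_add_of_le' hn
    rw [LinearMap.mem_ker, pow_succ, Module.End.mul_apply, hYv0, map_zero]
  obtain ⟨W₁, hW₁K, ⟨hW₁, hv0W₁⟩, hmin⟩ := exists_minimal_le_of_wellFoundedLT
    (fun W ↦ IsNondegInvariant σ Y τ W ∧ v0 ∈ W) _
    ⟨isNondegInvariant_ker_pow hσ0 hYσ hY hτl hτr hFit, hv0⟩
  have hW₂ := hW₁.orthogonal hrefl hτl hτr hY hτσ hσσ
  have hcompl := hW₁.isCompl_orthogonal hrefl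
  exact ⟨W₁, orthogonal τ W₁, hcompl.sup_eq_top, hcompl.inf_eq_bot, hW₁.mapsTo_Y, hW₂.mapsTo_Y,
    hW₁.mapsTo_σ, hW₂.mapsTo_σ, fun u hu v hv ↦ ⟨hv u hu, hrefl _ _ (hv u hu)⟩,
    hW₁.separatingLeft, hW₁.separatingRight, hW₂.separatingLeft, hW₂.separatingRight, hv0W₁,
    ⟨n, fun w hw ↦ hW₁K hw⟩, fun W' hle hY' hσ' hv0' hl' hr' ↦
      le_antisymm hle (hmin ⟨⟨hY', hσ', hl', hr'⟩, hv0'⟩ hle)⟩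

/-- Lemma 2.4: every distinguished triple splits off an indecomposable
nilpotent distinguished summand `W₁` containing `v⁰`, with a `τ`-orthogonal
complementary summand `W₂`. -/
theorem exists_indecomposable_nilpotent_summand
    {V : Type*} [AddCommGroup V] [Module ℂ V] [FiniteDimensional ℂ V]
    (σ : V → V) (Y : Module.End ℂ V) (τ : V →ₗ[ℂ] V →ₗ[ℂ] ℂ) (v0 : V)
    (hσadd : ∀ u v : V, σ (u + v) = σ u + σ v)
    (hσsmul : ∀ (a : ℂ) (v : V), σ (a • v) = (starRingEnd ℂ) a • σ v)
    (hσbij : Function.Bijective σ)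
    (hσinv : (∀ v : V, σ (σ v) = v) ∨ (∀ v : V, σ (σ v) = -v))
    (hτl : ∀ u : V, (∀ v : V, τ u v = 0) → u = 0)
    (hτr : ∀ v : V, (∀ u : V, τ u v = 0) → v = 0)
    (hτsa : (∀ u v : V, τ u v = τ v u) ∨ (∀ u v : V, τ u v = -(τ v u)))
    (hτσ : ∀ u v : V, τ (σ u) (σ v) = (starRingEnd ℂ) (τ u v))
    (hYσ : ∀ v : V, Y (σ v) = σ (Y v))
    (hskew : ∀ u v : V, τ (Y u) v + τ u (Y v) = 0)
    (hv0 : IsSpecial σ v0) (hτv0 : τ v0 v0 = 0) (hYv0 : Y v0 = 0) :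
    ∃ W₁ W₂ : Submodule ℂ V,
      W₁ ⊔ W₂ = ⊤ ∧ W₁ ⊓ W₂ = ⊥ ∧
      (∀ w ∈ W₁, Y w ∈ W₁) ∧ (∀ w ∈ W₂, Y w ∈ W₂) ∧
      (∀ w ∈ W₁, σ w ∈ W₁) ∧ (∀ w ∈ W₂, σ w ∈ W₂) ∧
      (∀ u ∈ W₁, ∀ v ∈ W₂, τ u v = 0 ∧ τ v u = 0) ∧
      (∀ u ∈ W₁, (∀ v ∈ W₁, τ u v = 0) → u = 0) ∧
      (∀ v ∈ W₁, (∀ u ∈ W₁, τ u v = 0) → v = 0) ∧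
      (∀ u ∈ W₂, (∀ v ∈ W₂, τ u v = 0) → u = 0) ∧
      (∀ v ∈ W₂, (∀ u ∈ W₂, τ u v = 0) → v = 0) ∧
      v0 ∈ W₁ ∧
      (∃ n : ℕ, ∀ w ∈ W₁, (Y ^ n) w = 0) ∧
      (∀ W' : Submodule ℂ V, W' ≤ W₁ →
        (∀ w ∈ W', Y w ∈ W') → (∀ w ∈ W', σ w ∈ W') → v0 ∈ W' →
        (∀ u ∈ W', (∀ v ∈ W', τ u v = 0) → u = 0) →
        (∀ v ∈ W', (∀ u ∈ W', τ u v = 0) → v = 0) →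
        W' = W₁) :=
  exists_indecomposable_nilpotent_summand_general σ Y τ v0 hσadd hσinv hτl hτr hτsa hτσ hYσ hskew
    hYv0
end

section
/- (Existence part of the main theorem.) Let (Y, V, v⁰; σ, τ) be a distinguished triple. Then there exist a natural number k ≥ 0 and subspaces W₀, W₁, …, W_k of V such that: V = W₀ ⊕ W₁ ⊕ ⋯ ⊕ W_k; the subspaces are pairwise τ-orthogonal, each is Y-invariant and σ-invariant, and τ restricted to each Wᵢ is nondegenerate; v⁰ ∈ W₀; Y restricted to W₀ is nilpotent; the distinguished triple (Y|W₀, W₀, v⁰; σ|W₀, τ|W₀) is indecomposable; and for each i with 1 ≤ i ≤ k the pair (Y|Wᵢ, Wᵢ; σ|Wᵢ, τ|Wᵢ) is indecomposable, i.e. Wᵢ cannot be written as a direct sum of two nonzero Y-invariant and σ-invariant subspaces that are τ-orthogonal and on each of which τ is nondegenerate. -/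
/-- A `τ`-nondegenerate, `Y`- and `σ`-invariant subspace `W` is *indecomposable as a
pair* if it is not the direct sum of two nonzero `Y`- and `σ`-invariant,
`τ`-orthogonal subspaces on each of which `τ` is nondegenerate. -/
def PairIndecomposable {V : Type*} [AddCommGroup V] [Module ℂ V]
    (Y : Module.End ℂ V) (σ : V → V) (τ : V →ₗ[ℂ] V →ₗ[ℂ] ℂ)
    (W : Submodule ℂ V) : Prop :=
  ¬ ∃ U₁ U₂ : Submodule ℂ V,
      U₁ ≠ ⊥ ∧ U₂ ≠ ⊥ ∧ U₁ ⊔ U₂ = W ∧ U₁ ⊓ U₂ = ⊥ ∧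
      (∀ u ∈ U₁, Y u ∈ U₁) ∧ (∀ u ∈ U₂, Y u ∈ U₂) ∧
      (∀ u ∈ U₁, σ u ∈ U₁) ∧ (∀ u ∈ U₂, σ u ∈ U₂) ∧
      (∀ u ∈ U₁, ∀ v ∈ U₂, τ u v = 0 ∧ τ v u = 0) ∧
      (∀ u ∈ U₁, (∀ v ∈ U₁, τ u v = 0) → u = 0) ∧
      (∀ v ∈ U₁, (∀ u ∈ U₁, τ u v = 0) → v = 0) ∧
      (∀ u ∈ U₂, (∀ v ∈ U₂, τ u v = 0) → u = 0) ∧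
      (∀ v ∈ U₂, (∀ u ∈ U₂, τ u v = 0) → v = 0)

open Module

lemma pair_decomp {V : Type*} [AddCommGroup V] [Module ℂ V] [FiniteDimensional ℂ V]
    (Y : Module.End ℂ V) (σ : V → V) (τ : V →ₗ[ℂ] V →ₗ[ℂ] ℂ) :
    ∀ (n : ℕ) (U : Submodule ℂ V), Module.finrank ℂ U ≤ n →
      (∀ u ∈ U, Y u ∈ U) → (∀ u ∈ U, σ u ∈ U) →
      (∀ u ∈ U, (∀ v ∈ U, τ u v = 0) → u = 0) →
      (∀ v ∈ U, (∀ u ∈ U, τ u v = 0) → v = 0) →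
      ∃ (m : ℕ) (P : Fin m → Submodule ℂ V),
        (⨆ i, P i) = U ∧
        (∀ i j, i ≠ j → ∀ u ∈ P i, ∀ v ∈ P j, τ u v = 0) ∧
        (∀ i, ∀ u ∈ P i, Y u ∈ P i) ∧
        (∀ i, ∀ u ∈ P i, σ u ∈ P i) ∧
        (∀ i, ∀ u ∈ P i, (∀ v ∈ P i, τ u v = 0) → u = 0) ∧
        (∀ i, ∀ v ∈ P i, (∀ u ∈ P i, τ u v = 0) → v = 0) ∧
        (∀ i, PairIndecomposable Y σ τ (P i)) := by
  intro n
  induction n with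
  | zero =>
    intro U hU hYU hσU hndl hndr
    by_cases h : PairIndecomposable Y σ τ U
    · exact ⟨1, fun _ => U, iSup_const, fun i j hij => absurd (Subsingleton.elim i j) hij,
        fun _ => hYU, fun _ => hσU, fun _ => hndl, fun _ => hndr, fun _ => h⟩
    · exfalso
      simp only [PairIndecomposable, not_not] at h
      obtain ⟨U₁, U₂, hne₁, hne₂, hsup, hinf, -⟩ := h
      have hfr := Submodule.finrank_sup_add_finrank_inf_eq U₁ U₂
      rw [hsup, hinf, finrank_bot] at hfr
      have h1 : finrank ℂ U₁ ≠ 0 := fun h0 => hne₁ (Submodule.finrank_eq_zero.mp h0)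
      omega
  | succ n ih =>
    intro U hU hYU hσU hndl hndr
    by_cases h : PairIndecomposable Y σ τ U
    · exact ⟨1, fun _ => U, iSup_const, fun i j hij => absurd (Subsingleton.elim i j) hij,
        fun _ => hYU, fun _ => hσU, fun _ => hndl, fun _ => hndr, fun _ => h⟩
    simp only [PairIndecomposable, not_not] at h
    obtain ⟨U₁, U₂, hne₁, hne₂, hsup, hinf, hY₁, hY₂, hσ₁, hσ₂, horth, hl₁, hr₁, hl₂, hr₂⟩ := h
    have hfr := Submodule.finrank_sup_add_finrank_inf_eq U₁ U₂
    rw [hsup, hinf, finrank_bot] at hfr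
    have h1 : finrank ℂ U₁ ≠ 0 := fun h0 => hne₁ (Submodule.finrank_eq_zero.mp h0)
    have h2 : finrank ℂ U₂ ≠ 0 := fun h0 => hne₂ (Submodule.finrank_eq_zero.mp h0)
    obtain ⟨m₁, P₁, hsup₁, horth₁, hYP₁, hσP₁, hlP₁, hrP₁, hind₁⟩ :=
      ih U₁ (by omega) hY₁ hσ₁ hl₁ hr₁
    obtain ⟨m₂, P₂, hsup₂, horth₂, hYP₂, hσP₂, hlP₂, hrP₂, hind₂⟩ :=
      ih U₂ (by omega) hY₂ hσ₂ hl₂ hr₂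
    have hPU₁ : ∀ a, P₁ a ≤ U₁ := fun a => hsup₁ ▸ le_iSup P₁ a
    have hPU₂ : ∀ a, P₂ a ≤ U₂ := fun a => hsup₂ ▸ le_iSup P₂ a
    refine ⟨m₁ + m₂, fun i => if h : (i : ℕ) < m₁ then P₁ ⟨i, h⟩
      else P₂ ⟨(i : ℕ) - m₁, by omega⟩, ?_, ?_, ?_, ?_, ?_, ?_, ?_⟩
    · apply le_antisymm
      · apply iSup_le
        intro i
        beta_reduce
        by_cases hi : (i : ℕ) < m₁
        · rw [dif_pos hi]; exact (hPU₁ _).trans (hsup ▸ le_sup_left)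
        · rw [dif_neg hi]; exact (hPU₂ _).trans (hsup ▸ le_sup_right)
      · rw [← hsup]
        apply sup_le
        · rw [← hsup₁]
          apply iSup_le
          intro j
          refine le_iSup_of_le ⟨(j : ℕ), by omega⟩ ?_
          simp [j.isLt]
        · rw [← hsup₂]
          apply iSup_le
          intro j
          refine le_iSup_of_le ⟨m₁ + (j : ℕ), by omega⟩ ?_
          have hc : ¬ (m₁ + (j : ℕ) < m₁) := by omega
          simp [hc, Nat.add_sub_cancel_left]
    · intro i j hij u hu v hv
      beta_reduce at hu hv
      by_cases hi : (i : ℕ) < m₁ <;> by_cases hj : (j : ℕ) < m₁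
      · rw [dif_pos hi] at hu; rw [dif_pos hj] at hv
        exact horth₁ _ _ (fun h => hij (Fin.ext (by simpa using congrArg Fin.val h))) u hu v hv
      · rw [dif_pos hi] at hu; rw [dif_neg hj] at hv
        exact (horth u (hPU₁ _ hu) v (hPU₂ _ hv)).1
      · rw [dif_neg hi] at hu; rw [dif_pos hj] at hv
        exact (horth v (hPU₁ _ hv) u (hPU₂ _ hu)).2
      · rw [dif_neg hi] at hu; rw [dif_neg hj] at hv
        refine horth₂ _ _ (fun h => hij (Fin.ext ?_)) u hu v hv
        have h' := congrArg Fin.val h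
        simp only [Fin.val_mk] at h'
        omega
    · intro i u hu
      beta_reduce at hu ⊢
      by_cases hi : (i : ℕ) < m₁
      · rw [dif_pos hi] at hu ⊢; exact hYP₁ _ u hu
      · rw [dif_neg hi] at hu ⊢; exact hYP₂ _ u hu
    · intro i u hu
      beta_reduce at hu ⊢
      by_cases hi : (i : ℕ) < m₁
      · rw [dif_pos hi] at hu ⊢; exact hσP₁ _ u hu
      · rw [dif_neg hi] at hu ⊢; exact hσP₂ _ u hu
    · intro i u hu hv
      beta_reduce at hu hv
      by_cases hi : (i : ℕ) < m₁
      · rw [dif_pos hi] at hu hv; exact hlP₁ _ u hu hv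
      · rw [dif_neg hi] at hu hv; exact hlP₂ _ u hu hv
    · intro i v hv hu
      beta_reduce at hv hu
      by_cases hi : (i : ℕ) < m₁
      · rw [dif_pos hi] at hv hu; exact hrP₁ _ v hv hu
      · rw [dif_neg hi] at hv hu; exact hrP₂ _ v hv hu
    · intro i
      beta_reduce
      by_cases hi : (i : ℕ) < m₁
      · rw [dif_pos hi]; exact hind₁ _
      · rw [dif_neg hi]; exact hind₂ _

/-- Theorem 2.1, existence: every distinguished triple is the sum of an
indecomposable nilpotent distinguished triple and finitely many indecomposable pairs. -/
theorem exists_decomposition_into_indecomposables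
    {V : Type*} [AddCommGroup V] [Module ℂ V] [FiniteDimensional ℂ V]
    (σ : V → V) (Y : Module.End ℂ V) (τ : V →ₗ[ℂ] V →ₗ[ℂ] ℂ) (v0 : V)
    (hσadd : ∀ u v : V, σ (u + v) = σ u + σ v)
    (hσsmul : ∀ (a : ℂ) (v : V), σ (a • v) = (starRingEnd ℂ) a • σ v)
    (hσbij : Function.Bijective σ)
    (hσinv : (∀ v : V, σ (σ v) = v) ∨ (∀ v : V, σ (σ v) = -v))
    (hτl : ∀ u : V, (∀ v : V, τ u v = 0) → u = 0)
    (hτr : ∀ v : V, (∀ u : V, τ u v = 0) → v = 0)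
    (hτsa : (∀ u v : V, τ u v = τ v u) ∨ (∀ u v : V, τ u v = -(τ v u)))
    (hτσ : ∀ u v : V, τ (σ u) (σ v) = (starRingEnd ℂ) (τ u v))
    (hYσ : ∀ v : V, Y (σ v) = σ (Y v))
    (hskew : ∀ u v : V, τ (Y u) v + τ u (Y v) = 0)
    (hv0 : IsSpecial σ v0) (hτv0 : τ v0 v0 = 0) (hYv0 : Y v0 = 0) :
    ∃ (k : ℕ) (W : Fin (k + 1) → Submodule ℂ V),
      (⨆ i, W i) = ⊤ ∧
      (∀ i : Fin (k + 1), W i ⊓ (⨆ j : {j : Fin (k + 1) // j ≠ i}, W j.1) = ⊥) ∧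
      (∀ i j : Fin (k + 1), i ≠ j → ∀ u ∈ W i, ∀ v ∈ W j, τ u v = 0) ∧
      (∀ i, ∀ w ∈ W i, Y w ∈ W i) ∧
      (∀ i, ∀ w ∈ W i, σ w ∈ W i) ∧
      (∀ i, ∀ u ∈ W i, (∀ v ∈ W i, τ u v = 0) → u = 0) ∧
      (∀ i, ∀ v ∈ W i, (∀ u ∈ W i, τ u v = 0) → v = 0) ∧
      v0 ∈ W 0 ∧
      (∃ n : ℕ, ∀ w ∈ W 0, (Y ^ n) w = 0) ∧
      (∀ W' : Submodule ℂ V, W' ≤ W 0 →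
        (∀ w ∈ W', Y w ∈ W') → (∀ w ∈ W', σ w ∈ W') → v0 ∈ W' →
        (∀ u ∈ W', (∀ v ∈ W', τ u v = 0) → u = 0) →
        (∀ v ∈ W', (∀ u ∈ W', τ u v = 0) → v = 0) →
        W' = W 0) ∧
      (∀ i : Fin (k + 1), i ≠ 0 → PairIndecomposable Y σ τ (W i)) := by
  classical
  have hσ0 : σ 0 = 0 := by simpa using hσsmul 0 0
  have hσneg : ∀ v : V, σ (-v) = -σ v := by
    intro v; simpa using hσsmul (-1) v
  have hYσpow : ∀ (n : ℕ) (v : V), (Y ^ n) (σ v) = σ ((Y ^ n) v) := by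
    intro n
    induction n with
    | zero => intro v; simp
    | succ n ihn =>
      intro v
      rw [pow_succ, Module.End.mul_apply, Module.End.mul_apply, hYσ, ihn]
  have hswap0 : ∀ u v : V, τ u v = 0 → τ v u = 0 := by
    intro u v h
    rcases hτsa with hs | hs
    · rw [hs]; exact h
    · rw [hs, h, neg_zero]
  have hskew' : ∀ u v : V, τ u (Y v) = -τ (Y u) v := by
    intro u v
    have h := hskew u v
    linear_combination h
  have hpow : ∀ (n : ℕ) (u v : V), τ u ((Y ^ n) v) = (-1 : ℂ) ^ n * τ ((Y ^ n) u) v := by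
    intro n
    induction n with
    | zero => intro u v; simp
    | succ n ihn =>
      intro u v
      calc τ u ((Y ^ (n + 1)) v) = τ u ((Y ^ n) (Y v)) := by
            rw [pow_succ, Module.End.mul_apply]
        _ = (-1 : ℂ) ^ n * τ ((Y ^ n) u) (Y v) := ihn u (Y v)
        _ = (-1 : ℂ) ^ n * -τ (Y ((Y ^ n) u)) v := by rw [hskew']
        _ = (-1 : ℂ) ^ (n + 1) * τ ((Y ^ (n + 1)) u) v := by
            rw [pow_succ' Y, Module.End.mul_apply]; ring
  set N := Module.finrank ℂ V with hN
  have hN0 : N ≠ 0 := by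
    intro h0
    have : Subsingleton V := by
      rw [← Module.finrank_zero_iff (R := ℂ) (M := V), ← hN, h0]
    exact hv0.1 (Subsingleton.elim v0 0)
  set K0 := LinearMap.ker (Y ^ N) with hK0
  set R0 := LinearMap.range (Y ^ N) with hR0
  have hcomm : ∀ u : V, (Y ^ N) (Y u) = Y ((Y ^ N) u) := by
    intro u
    rw [← Module.End.mul_apply, ← pow_succ, pow_succ', Module.End.mul_apply]
  have hYK0 : ∀ u ∈ K0, Y u ∈ K0 := by
    intro u hu
    rw [hK0, LinearMap.mem_ker] at hu ⊢
    rw [hcomm, hu, map_zero]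
  have hσK0 : ∀ u ∈ K0, σ u ∈ K0 := by
    intro u hu
    rw [hK0, LinearMap.mem_ker] at hu ⊢
    rw [hYσpow, hu, hσ0]
  have hKR : ∀ u ∈ K0, ∀ v ∈ R0, τ u v = 0 := by
    intro u hu v hv
    rw [hK0, LinearMap.mem_ker] at hu
    obtain ⟨w, rfl⟩ := hv
    rw [hpow, hu, map_zero, LinearMap.zero_apply, mul_zero]
  have hinfKR : K0 ⊓ R0 = ⊥ := by
    rw [eq_bot_iff]
    rintro x hx
    obtain ⟨hx1, hx2⟩ := Submodule.mem_inf.mp hx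
    obtain ⟨w, hw⟩ := hx2
    rw [hK0, LinearMap.mem_ker] at hx1
    have hw2 : w ∈ LinearMap.ker (Y ^ (N + N)) := by
      rw [LinearMap.mem_ker, pow_add, Module.End.mul_apply, hw, hx1]
    rw [hN] at hw2
    rw [Module.End.ker_pow_eq_ker_pow_finrank_of_le (by omega)] at hw2
    rw [← hN] at hw2
    rw [LinearMap.mem_ker] at hw2
    rw [Submodule.mem_bot, ← hw, hw2]
  have hfrKR : Module.finrank ℂ K0 + Module.finrank ℂ R0 = N := by
    have h := LinearMap.finrank_range_add_finrank_ker (Y ^ N)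
    rw [← hR0, ← hK0] at h
    omega
  have hsupKR : K0 ⊔ R0 = ⊤ := by
    apply Submodule.eq_top_of_finrank_eq
    have h2 := Submodule.finrank_sup_add_finrank_inf_eq K0 R0
    rw [hinfKR, finrank_bot] at h2
    omega
  have hdecKR : ∀ x : V, ∃ a ∈ K0, ∃ b ∈ R0, x = a + b := by
    intro x
    have hx : x ∈ K0 ⊔ R0 := hsupKR ▸ Submodule.mem_top
    obtain ⟨a, ha, b, hb, h⟩ := Submodule.mem_sup.mp hx
    exact ⟨a, ha, b, hb, h.symm⟩
  have hndlK0 : ∀ u ∈ K0, (∀ v ∈ K0, τ u v = 0) → u = 0 := by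
    intro u hu h
    apply hτl
    intro x
    obtain ⟨a, ha, b, hb, rfl⟩ := hdecKR x
    rw [map_add, h a ha, hKR u hu b hb, add_zero]
  have hndrK0 : ∀ v ∈ K0, (∀ u ∈ K0, τ u v = 0) → v = 0 := by
    intro v hv h
    apply hτr
    intro x
    obtain ⟨a, ha, b, hb, rfl⟩ := hdecKR x
    rw [map_add, LinearMap.add_apply, h a ha, hswap0 _ _ (hKR v hv b hb), add_zero]
  have hv0K : v0 ∈ K0 := by
    rw [hK0, LinearMap.mem_ker]
    obtain ⟨M, hM⟩ : ∃ M, N = M + 1 := ⟨N - 1, by omega⟩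
    rw [hM, pow_succ, Module.End.mul_apply, hYv0, map_zero]
  -- minimal admissible subspace W0
  have hexQ : ∃ n : ℕ, ∃ U : Submodule ℂ V,
      (U ≤ K0 ∧ (∀ u ∈ U, Y u ∈ U) ∧ (∀ u ∈ U, σ u ∈ U) ∧ v0 ∈ U ∧
        (∀ u ∈ U, (∀ v ∈ U, τ u v = 0) → u = 0) ∧
        (∀ v ∈ U, (∀ u ∈ U, τ u v = 0) → v = 0)) ∧ Module.finrank ℂ U = n :=
    ⟨_, K0, ⟨le_refl _, hYK0, hσK0, hv0K, hndlK0, hndrK0⟩, rfl⟩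
  obtain ⟨W0, hQW0, hdW0⟩ := Nat.find_spec hexQ
  have hmin : ∀ U : Submodule ℂ V,
      (U ≤ K0 ∧ (∀ u ∈ U, Y u ∈ U) ∧ (∀ u ∈ U, σ u ∈ U) ∧ v0 ∈ U ∧
        (∀ u ∈ U, (∀ v ∈ U, τ u v = 0) → u = 0) ∧
        (∀ v ∈ U, (∀ u ∈ U, τ u v = 0) → v = 0)) → Nat.find hexQ ≤ Module.finrank ℂ U :=
    fun U hU => Nat.find_min' hexQ ⟨U, hU, rfl⟩
  obtain ⟨hW0K, hYW0, hσW0, hv0W0, hndlW0, hndrW0⟩ := hQW0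
  -- the orthogonal complement C of W0
  set C : Submodule ℂ V := ⨅ u : W0, LinearMap.ker (τ u) with hC
  have hmemC : ∀ v : V, v ∈ C ↔ ∀ u ∈ W0, τ u v = 0 := by
    intro v
    rw [hC]
    simp only [Submodule.mem_iInf, LinearMap.mem_ker, Subtype.forall]
  have hWC : ∀ u ∈ W0, ∀ v ∈ C, τ u v = 0 := fun u hu v hv => (hmemC v).1 hv u hu
  have hσW0surj : ∀ u ∈ W0, ∃ u' ∈ W0, σ u' = u := by
    intro u hu
    rcases hσinv with h2 | h2
    · exact ⟨σ u, hσW0 u hu, h2 u⟩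
    · refine ⟨-(σ u), Submodule.neg_mem _ (hσW0 u hu), ?_⟩
      rw [hσneg, h2, neg_neg]
  have hYC : ∀ v ∈ C, Y v ∈ C := by
    intro v hv
    rw [hmemC]
    intro u hu
    rw [hskew', hWC (Y u) (hYW0 u hu) v hv, neg_zero]
  have hσC : ∀ v ∈ C, σ v ∈ C := by
    intro v hv
    rw [hmemC]
    intro u hu
    obtain ⟨u', hu', rfl⟩ := hσW0surj u hu
    rw [hτσ, hWC u' hu' v hv, map_zero]
  have hinfWC : W0 ⊓ C = ⊥ := by
    rw [eq_bot_iff]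
    rintro x hx
    obtain ⟨hx1, hx2⟩ := Submodule.mem_inf.mp hx
    rw [Submodule.mem_bot]
    exact hndrW0 x hx1 (fun u hu => (hmemC x).1 hx2 u hu)
  -- dimension of C via the dual pairing
  let φ : V →ₗ[ℂ] (↥W0 →ₗ[ℂ] ℂ) :=
    { toFun := fun v => (τ.flip v).comp W0.subtype
      map_add' := fun a b => by ext u; simp
      map_smul' := fun c a => by ext u; simp }
  have hφapp : ∀ (v : V) (u : ↥W0), φ v u = τ u v := fun v u => rfl
  have hkerφ : LinearMap.ker φ = C := by
    ext v
    rw [LinearMap.mem_ker, hmemC]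
    constructor
    · intro h u hu
      have h2 := LinearMap.ext_iff.mp h ⟨u, hu⟩
      rw [hφapp] at h2
      simpa using h2
    · intro h
      ext u
      have := h u u.2
      simpa [hφapp] using this
  have hφsurj : Function.Surjective φ := by
    have hinj : Function.Injective (φ.comp W0.subtype) := by
      rw [← LinearMap.ker_eq_bot, eq_bot_iff]
      rintro w hw
      rw [LinearMap.mem_ker] at hw
      rw [Submodule.mem_bot]
      have hw0 : (w : V) = 0 := by
        apply hndrW0 w w.2
        intro u hu
        have h2 := LinearMap.ext_iff.mp hw ⟨u, hu⟩
        simpa [hφapp] using h2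
      exact Subtype.ext hw0
    have hfr : Module.finrank ℂ ↥W0 = Module.finrank ℂ (↥W0 →ₗ[ℂ] ℂ) :=
      (Subspace.dual_finrank_eq (K := ℂ) (V := ↥W0)).symm
    have hsurj2 : Function.Surjective (φ.comp W0.subtype) :=
      (LinearMap.injective_iff_surjective_of_finrank_eq_finrank hfr).mp hinj
    intro f
    obtain ⟨w, hw⟩ := hsurj2 f
    exact ⟨(w : V), hw⟩
  have hfrC : Module.finrank ℂ W0 + Module.finrank ℂ C = N := by
    have h1 := LinearMap.finrank_range_add_finrank_ker φ
    rw [hkerφ, LinearMap.range_eq_top.mpr hφsurj, finrank_top] at h1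
    have h2 : Module.finrank ℂ (↥W0 →ₗ[ℂ] ℂ) = Module.finrank ℂ ↥W0 :=
      Subspace.dual_finrank_eq (K := ℂ) (V := ↥W0)
    omega
  have hsupWC : W0 ⊔ C = ⊤ := by
    apply Submodule.eq_top_of_finrank_eq
    have h2 := Submodule.finrank_sup_add_finrank_inf_eq W0 C
    rw [hinfWC, finrank_bot] at h2
    omega
  have hdecWC : ∀ x : V, ∃ a ∈ W0, ∃ b ∈ C, x = a + b := by
    intro x
    have hx : x ∈ W0 ⊔ C := hsupWC ▸ Submodule.mem_top
    obtain ⟨a, ha, b, hb, h⟩ := Submodule.mem_sup.mp hx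
    exact ⟨a, ha, b, hb, h.symm⟩
  have hndlC : ∀ u ∈ C, (∀ v ∈ C, τ u v = 0) → u = 0 := by
    intro u hu h
    apply hτl
    intro x
    obtain ⟨a, ha, b, hb, rfl⟩ := hdecWC x
    rw [map_add, hswap0 _ _ (hWC a ha u hu), h b hb, add_zero]
  have hndrC : ∀ v ∈ C, (∀ u ∈ C, τ u v = 0) → v = 0 := by
    intro v hv h
    apply hτr
    intro x
    obtain ⟨a, ha, b, hb, rfl⟩ := hdecWC x
    rw [map_add, LinearMap.add_apply, hWC a ha v hv, h b hb, add_zero]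
  -- decompose C into indecomposable pairs
  obtain ⟨m, P, hsupP, horthP, hYP, hσP, hlP, hrP, hindP⟩ :=
    pair_decomp Y σ τ (Module.finrank ℂ C) C le_rfl hYC hσC hndlC hndrC
  have hPC : ∀ a, P a ≤ C := fun a => hsupP ▸ le_iSup P a
  -- assemble the family
  set Wf : Fin (m + 1) → Submodule ℂ V := Fin.cases W0 P with hWf
  have horthW : ∀ i j : Fin (m + 1), i ≠ j → ∀ u ∈ Wf i, ∀ v ∈ Wf j, τ u v = 0 := by
    intro i j hij
    rcases Fin.eq_zero_or_eq_succ i with rfl | ⟨a, rfl⟩ <;>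
      rcases Fin.eq_zero_or_eq_succ j with rfl | ⟨b, rfl⟩
    · exact absurd rfl hij
    · simp only [hWf, Fin.cases_zero, Fin.cases_succ]
      intro u hu v hv
      exact hWC u hu v (hPC b hv)
    · simp only [hWf, Fin.cases_zero, Fin.cases_succ]
      intro u hu v hv
      exact hswap0 _ _ (hWC v hv u (hPC a hu))
    · simp only [hWf, Fin.cases_succ]
      intro u hu v hv
      refine horthP a b (fun h => hij ?_) u hu v hv
      rw [h]
  have hYW : ∀ i, ∀ w ∈ Wf i, Y w ∈ Wf i := by
    intro i
    rcases Fin.eq_zero_or_eq_succ i with rfl | ⟨a, rfl⟩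
    · simpa only [hWf, Fin.cases_zero] using hYW0
    · simpa only [hWf, Fin.cases_succ] using hYP a
  have hσWf : ∀ i, ∀ w ∈ Wf i, σ w ∈ Wf i := by
    intro i
    rcases Fin.eq_zero_or_eq_succ i with rfl | ⟨a, rfl⟩
    · simpa only [hWf, Fin.cases_zero] using hσW0
    · simpa only [hWf, Fin.cases_succ] using hσP a
  have hlW : ∀ i, ∀ u ∈ Wf i, (∀ v ∈ Wf i, τ u v = 0) → u = 0 := by
    intro i
    rcases Fin.eq_zero_or_eq_succ i with rfl | ⟨a, rfl⟩
    · simpa only [hWf, Fin.cases_zero] using hndlW0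
    · simpa only [hWf, Fin.cases_succ] using hlP a
  have hrW : ∀ i, ∀ v ∈ Wf i, (∀ u ∈ Wf i, τ u v = 0) → v = 0 := by
    intro i
    rcases Fin.eq_zero_or_eq_succ i with rfl | ⟨a, rfl⟩
    · simpa only [hWf, Fin.cases_zero] using hndrW0
    · simpa only [hWf, Fin.cases_succ] using hrP a
  refine ⟨m, Wf, ?_, ?_, horthW, hYW, hσWf, hlW, hrW, ?_, ?_, ?_, ?_⟩
  · rw [eq_top_iff, ← hsupWC]
    apply sup_le
    · exact le_iSup_of_le 0 (by simp [hWf])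
    · rw [← hsupP]
      exact iSup_le fun j => le_iSup_of_le j.succ (by simp [hWf])
  · intro i
    rw [eq_bot_iff]
    rintro x hx
    obtain ⟨hxi, hxs⟩ := Submodule.mem_inf.mp hx
    have hle : (⨆ j : {j : Fin (m + 1) // j ≠ i}, Wf j.1) ≤
        ⨅ u : ↥(Wf i), LinearMap.ker (τ u) := by
      apply iSup_le
      rintro ⟨j, hj⟩
      intro v hv
      simp only [Submodule.mem_iInf, LinearMap.mem_ker, Subtype.forall]
      intro u hu
      exact horthW i j (Ne.symm hj) u hu v hv
    have hx0 : ∀ u ∈ Wf i, τ u x = 0 := by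
      intro u hu
      have h2 := hle hxs
      simp only [Submodule.mem_iInf, LinearMap.mem_ker, Subtype.forall] at h2
      exact h2 u hu
    rw [Submodule.mem_bot]
    exact hrW i x hxi hx0
  · simp only [hWf, Fin.cases_zero]
    exact hv0W0
  · refine ⟨N, ?_⟩
    intro w hw
    simp only [hWf, Fin.cases_zero] at hw
    exact hW0K hw
  · intro W' hle hY' hσ' hv' hl' hr'
    simp only [hWf, Fin.cases_zero] at hle ⊢
    have h1 := hmin W' ⟨hle.trans hW0K, hY', hσ', hv', hl', hr'⟩
    have h2 : Module.finrank ℂ W0 ≤ Module.finrank ℂ W' := by omega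
    exact Submodule.eq_of_le_of_finrank_le hle h2
  · intro i hi
    rcases Fin.eq_zero_or_eq_succ i with rfl | ⟨a, rfl⟩
    · exact absurd rfl hi
    · simpa only [hWf, Fin.cases_succ] using hindP a
end

section
/- Let (Y, V, v⁰; σ, τ) be an indecomposable distinguished triple with Y nilpotent and of distinguished height h, and suppose there is a special vector w ∈ V with Y^h w = v⁰ and τ(w, v⁰) ≠ 0 (i.e. the parameter set contains a nonzero element). Then {w, Yw, Y²w, …, Y^h w} is a basis of V; in particular dim V = h + 1, dim ker Y = 1, and V is cyclic for Y with cyclic vector w. -/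
open Module Submodule

namespace LinearMap

variable {R M : Type*} [CommRing R] [AddCommGroup M] [Module R M]

def HasAntitriangularGram (B : M →ₗ[R] M →ₗ[R] R) {n : ℕ} (f : Fin (n + 1) → M) : Prop :=
  (∀ i j : Fin (n + 1), n < (i : ℕ) + j → B (f i) (f j) = 0) ∧
    ∀ i j : Fin (n + 1), (i : ℕ) + j = n → B (f i) (f j) ≠ 0

namespace HasAntitriangularGram

variable {B : M →ₗ[R] M →ₗ[R] R} {n : ℕ} {f : Fin (n + 1) → M}

theorem flip (hB : B.HasAntitriangularGram f) : B.flip.HasAntitriangularGram f :=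
  ⟨fun i j hij => hB.1 j i (by omega), fun i j hij => hB.2 j i (by omega)⟩

variable [NoZeroDivisors R]

/-- Pairing with `f (rev i)` isolates the coefficient `c i` once the `c k`, `k < i`, are known
to vanish. -/
theorem eq_zero_of_forall_apply_sum_eq_zero (hB : B.HasAntitriangularGram f)
    {c : Fin (n + 1) → R} (hc : ∀ j, B (∑ i, c i • f i) (f j) = 0) : c = 0 := by
  funext i
  induction i using WellFoundedLT.induction with
  | ind i ih =>
    have hi := hc i.rev
    simp only [map_sum, map_smul, sum_apply, smul_apply, smul_eq_mul] at hi
    rw [Finset.sum_eq_single i (fun k _ hki => ?_) (by simp)] at hi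
    · exact (mul_eq_zero.1 hi).resolve_right (hB.2 i i.rev (by rw [Fin.val_rev]; omega))
    · rcases lt_or_gt_of_ne hki with hk | hk
      · rw [ih k hk, Pi.zero_apply, zero_mul]
      · rw [hB.1 k i.rev (by rw [Fin.val_rev]; omega), mul_zero]

theorem linearIndependent (hB : B.HasAntitriangularGram f) : LinearIndependent R f :=
  Fintype.linearIndependent_iff.2 fun c hc =>
    congrFun (hB.eq_zero_of_forall_apply_sum_eq_zero fun j => by rw [hc, map_zero, zero_apply])

theorem eq_zero_of_mem_span (hB : B.HasAntitriangularGram f) {u : M}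
    (hu : u ∈ span R (Set.range f)) (hBu : ∀ v ∈ span R (Set.range f), B u v = 0) :
    u = 0 := by
  obtain ⟨c, rfl⟩ := (mem_span_range_iff_exists_fun R).1 hu
  have hc := hB.eq_zero_of_forall_apply_sum_eq_zero fun j =>
    hBu _ (subset_span (Set.mem_range_self j))
  simp [hc]

end HasAntitriangularGram

end LinearMap

section Krylov

variable {R M : Type*} [CommRing R] [AddCommGroup M] [Module R M] {Y : Module.End R M} {w : M}
  {h : ℕ}

theorem apply_pow_apply_eq_neg_one_pow_mul {B : M →ₗ[R] M →ₗ[R] R}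
    (hY : ∀ u v, B (Y u) v + B u (Y v) = 0) (a : ℕ) (u v : M) :
    B ((Y ^ a) u) v = (-1) ^ a * B u ((Y ^ a) v) := by
  induction a generalizing u with
  | zero => simp
  | succ a ih =>
    rw [pow_succ, Module.End.mul_apply, ih, eq_neg_of_add_eq_zero_left (hY u _),
      ← Module.End.mul_apply, ← pow_succ', pow_succ]
    ring

theorem hasAntitriangularGram_pow_apply {B : M →ₗ[R] M →ₗ[R] R}
    (hY : ∀ u v, B (Y u) v + B u (Y v) = 0) (hw : (Y ^ (h + 1)) w = 0)
    (hBw : B w ((Y ^ h) w) ≠ 0) :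
    B.HasAntitriangularGram fun i : Fin (h + 1) => (Y ^ (i : ℕ)) w := by
  have gram (a b : ℕ) : B ((Y ^ a) w) ((Y ^ b) w) = (-1) ^ a * B w ((Y ^ (a + b)) w) := by
    rw [apply_pow_apply_eq_neg_one_pow_mul hY, pow_add, Module.End.mul_apply]
  refine ⟨fun i j hij => ?_, fun i j hij => ?_⟩
  · rw [gram, Module.End.pow_map_zero_of_le hij hw, map_zero, mul_zero]
  · rwa [gram, hij, Ne, neg_one_pow_mul_eq_zero_iff]

theorem pow_apply_mem_span_pow_apply (hw : (Y ^ (h + 1)) w = 0) (k : ℕ) :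
    (Y ^ k) w ∈ span R (Set.range fun i : Fin (h + 1) => (Y ^ (i : ℕ)) w) := by
  rcases lt_or_ge k (h + 1) with hk | hk
  · exact subset_span ⟨⟨k, hk⟩, rfl⟩
  · rw [Module.End.pow_map_zero_of_le hk hw]
    exact zero_mem _

theorem apply_mem_span_pow_apply (hw : (Y ^ (h + 1)) w = 0) {u : M}
    (hu : u ∈ span R (Set.range fun i : Fin (h + 1) => (Y ^ (i : ℕ)) w)) :
    Y u ∈ span R (Set.range fun i : Fin (h + 1) => (Y ^ (i : ℕ)) w) := by
  refine (map_span_le Y _ _).2 ?_ (mem_map_of_mem hu)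
  rintro _ ⟨i, rfl⟩
  rw [← Module.End.mul_apply, ← pow_succ']
  exact pow_apply_mem_span_pow_apply hw _

theorem semilinearMap_apply_mem_span_pow_apply {ρ : R →+* R} [RingHomSurjective ρ]
    (σ : M →ₛₗ[ρ] M) (hYσ : ∀ v, Y (σ v) = σ (Y v)) {l : R} (hσw : σ w = l • w) {u : M}
    (hu : u ∈ span R (Set.range fun i : Fin (h + 1) => (Y ^ (i : ℕ)) w)) :
    σ u ∈ span R (Set.range fun i : Fin (h + 1) => (Y ^ (i : ℕ)) w) := by
  have hpow (k : ℕ) (v : M) : (Y ^ k) (σ v) = σ ((Y ^ k) v) := by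
    induction k with
    | zero => rfl
    | succ k ih => rw [pow_succ', Module.End.mul_apply, ih, hYσ, ← Module.End.mul_apply]
  refine (map_span_le σ _ _).2 ?_ (mem_map_of_mem hu)
  rintro _ ⟨i, rfl⟩
  rw [← hpow, hσw, map_smul]
  exact smul_mem _ _ (subset_span ⟨i, rfl⟩)

end Krylov

theorem finrank_ker_eq_one_of_linearIndependent_pow_apply {K V : Type*} [DivisionRing K]
    [AddCommGroup V] [Module K V] [FiniteDimensional K V] {Y : Module.End K V} {w : V} {h : ℕ}
    (hli : LinearIndependent K fun i : Fin (h + 1) => (Y ^ (i : ℕ)) w)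
    (hw : (Y ^ (h + 1)) w = 0) (hV : finrank K V = h + 1) :
    finrank K (LinearMap.ker Y) = 1 := by
  have hker : 0 < finrank K (LinearMap.ker Y) := by
    refine finrank_pos_iff_exists_ne_zero.2 ⟨⟨(Y ^ h) w, ?_⟩, ?_⟩
    · rwa [LinearMap.mem_ker, ← Module.End.mul_apply, ← pow_succ']
    · simpa using hli.ne_zero (Fin.last h)
  have hrange : h ≤ finrank K (LinearMap.range Y) := by
    have hshift := hli.comp Fin.succ (Fin.succ_injective h)
    rw [← Fintype.card_fin h, ← finrank_span_eq_card hshift]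
    refine Submodule.finrank_mono (span_le.2 ?_)
    rintro _ ⟨i, rfl⟩
    exact ⟨(Y ^ (i : ℕ)) w, by simp [pow_succ']⟩
  have := Y.finrank_range_add_finrank_ker
  omega

theorem IsSpecial.exists_eq_smul {V : Type*} [AddCommGroup V] [Module ℂ V] {σ : V → V} {w : V}
    (hw : IsSpecial σ w) (hσ : (∀ v, σ (σ v) = v) ∨ ∀ v, σ (σ v) = -v) :
    ∃ l : ℂ, σ w = l • w := by
  rcases hσ with hσ | hσ
  · rcases hw.2.1 hσ with e | e
    · exact ⟨1, by rw [e, one_smul]⟩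
    · exact ⟨-1, by rw [e, neg_one_smul]⟩
  · rcases hw.2.2 hσ with e | e
    · exact ⟨Complex.I, e⟩
    · exact ⟨-Complex.I, by rw [e, neg_smul]⟩

theorem single_jordan_block_of_nonzero_parameter_general
    {V : Type*} [AddCommGroup V] [Module ℂ V] [FiniteDimensional ℂ V]
    (σ : V → V) (Y : Module.End ℂ V) (τ : V →ₗ[ℂ] V →ₗ[ℂ] ℂ) (v0 : V)
    (hσadd : ∀ u v : V, σ (u + v) = σ u + σ v)
    (hσsmul : ∀ (a : ℂ) (v : V), σ (a • v) = (starRingEnd ℂ) a • σ v)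
    (hσinv : (∀ v : V, σ (σ v) = v) ∨ (∀ v : V, σ (σ v) = -v))
    (hYσ : ∀ v : V, Y (σ v) = σ (Y v))
    (hskew : ∀ u v : V, τ (Y u) v + τ u (Y v) = 0)
    (hYv0 : Y v0 = 0)
    (hindec : ∀ W : Submodule ℂ V,
      (∀ w ∈ W, Y w ∈ W) → (∀ w ∈ W, σ w ∈ W) → v0 ∈ W →
      (∀ u ∈ W, (∀ v ∈ W, τ u v = 0) → u = 0) →
      (∀ v ∈ W, (∀ u ∈ W, τ u v = 0) → v = 0) → W = ⊤)
    (h : ℕ) (w : V)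
    (hw : IsSpecial σ w) (hwh : (Y ^ h) w = v0) (hwτ : τ w v0 ≠ 0) :
    LinearIndependent ℂ (fun i : Fin (h + 1) => (Y ^ (i : ℕ)) w) ∧
      Submodule.span ℂ (Set.range fun i : Fin (h + 1) => (Y ^ (i : ℕ)) w) = ⊤ ∧
      Module.finrank ℂ V = h + 1 ∧
      Module.finrank ℂ (LinearMap.ker Y) = 1 := by
  have hYw : (Y ^ (h + 1)) w = 0 := by rw [pow_succ', Module.End.mul_apply, hwh, hYv0]
  have hgram := hasAntitriangularGram_pow_apply hskew hYw (by rwa [hwh])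
  obtain ⟨l, hl⟩ := hw.exists_eq_smul hσinv
  let σₗ : V →ₗ⋆[ℂ] V := { toFun := σ, map_add' := hσadd, map_smul' := hσsmul }
  have hspan : span ℂ (Set.range fun i : Fin (h + 1) => (Y ^ (i : ℕ)) w) = ⊤ :=
    hindec _ (fun _ => apply_mem_span_pow_apply hYw)
      (fun _ => semilinearMap_apply_mem_span_pow_apply σₗ hYσ hl)
      (hwh ▸ subset_span ⟨Fin.last h, rfl⟩) (fun _ => hgram.eq_zero_of_mem_span)
      (fun _ => hgram.flip.eq_zero_of_mem_span)
  have hrank : finrank ℂ V = h + 1 := by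
    rw [← finrank_top, ← hspan, finrank_span_eq_card hgram.linearIndependent, Fintype.card_fin]
  exact ⟨hgram.linearIndependent, hspan, hrank,
    finrank_ker_eq_one_of_linearIndependent_pow_apply hgram.linearIndependent hYw hrank⟩

/-- Proposition 3.1, Case 1: if an indecomposable nilpotent distinguished
triple of distinguished height `h` has a special vector `w` with `Y^h w = v⁰` and
`τ(w, v⁰) ≠ 0`, then `w, Yw, …, Y^h w` is a basis of `V`; in particular
`dim V = h + 1` and `dim ker Y = 1`. -/
theorem single_jordan_block_of_nonzero_parameter
    {V : Type*} [AddCommGroup V] [Module ℂ V] [FiniteDimensional ℂ V]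
    (σ : V → V) (Y : Module.End ℂ V) (τ : V →ₗ[ℂ] V →ₗ[ℂ] ℂ) (v0 : V)
    (hσadd : ∀ u v : V, σ (u + v) = σ u + σ v)
    (hσsmul : ∀ (a : ℂ) (v : V), σ (a • v) = (starRingEnd ℂ) a • σ v)
    (hσbij : Function.Bijective σ)
    (hσinv : (∀ v : V, σ (σ v) = v) ∨ (∀ v : V, σ (σ v) = -v))
    (hτl : ∀ u : V, (∀ v : V, τ u v = 0) → u = 0)
    (hτr : ∀ v : V, (∀ u : V, τ u v = 0) → v = 0)
    (hτsa : (∀ u v : V, τ u v = τ v u) ∨ (∀ u v : V, τ u v = -(τ v u)))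
    (hτσ : ∀ u v : V, τ (σ u) (σ v) = (starRingEnd ℂ) (τ u v))
    (hYσ : ∀ v : V, Y (σ v) = σ (Y v))
    (hskew : ∀ u v : V, τ (Y u) v + τ u (Y v) = 0)
    (hv0 : IsSpecial σ v0) (hτv0 : τ v0 v0 = 0) (hYv0 : Y v0 = 0)
    (hnil : IsNilpotent Y)
    (hindec : ∀ W : Submodule ℂ V,
      (∀ w ∈ W, Y w ∈ W) → (∀ w ∈ W, σ w ∈ W) → v0 ∈ W →
      (∀ u ∈ W, (∀ v ∈ W, τ u v = 0) → u = 0) →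
      (∀ v ∈ W, (∀ u ∈ W, τ u v = 0) → v = 0) → W = ⊤)
    (h : ℕ) (w : V)
    (hw : IsSpecial σ w) (hwh : (Y ^ h) w = v0) (hwτ : τ w v0 ≠ 0) :
    LinearIndependent ℂ (fun i : Fin (h + 1) => (Y ^ (i : ℕ)) w) ∧
      Submodule.span ℂ (Set.range fun i : Fin (h + 1) => (Y ^ (i : ℕ)) w) = ⊤ ∧
      Module.finrank ℂ V = h + 1 ∧
      Module.finrank ℂ (LinearMap.ker Y) = 1 :=
  single_jordan_block_of_nonzero_parameter_general σ Y τ v0 hσadd hσsmul hσinv hYσ hskew hYv0 hindec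
    h w hw hwh hwτ
end

section
/- Let V be a finite-dimensional complex vector space, τ : V × V → ℂ a bilinear form, and Y : V → V a ℂ-linear map with τ(Yu, v) + τ(u, Yv) = 0 for all u, v. Let h be a natural number with Y^{h+1} = 0, and let w ∈ V satisfy τ(w, Y^h w) ≠ 0. Then the vectors w, Yw, Y²w, …, Y^h w are linearly independent, and the restriction of τ to their span W̃ = span{w, Yw, …, Y^h w} is nondegenerate. (Indeed τ(Y^{i}w, Y^{j}w) = 0 whenever i + j > h, and τ(Y^{i}w, Y^{j}w) = (−1)^{i} τ(w, Y^h w) whenever i + j = h.) -/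
/-- if `Y` is `τ`-skew with `Y^(h+1) = 0` and `τ(w, Y^h w) ≠ 0`, then
`w, Yw, …, Y^h w` are linearly independent and `τ` is nondegenerate on their span. -/
theorem cyclic_span_nondegenerate
    {V : Type*} [AddCommGroup V] [Module ℂ V] [FiniteDimensional ℂ V]
    (τ : V →ₗ[ℂ] V →ₗ[ℂ] ℂ)
    (Y : Module.End ℂ V)
    (hskew : ∀ u v : V, τ (Y u) v + τ u (Y v) = 0)
    (h : ℕ) (hY : Y ^ (h + 1) = 0)
    (w : V) (hw : τ w ((Y ^ h) w) ≠ 0) :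
    LinearIndependent ℂ (fun i : Fin (h + 1) => (Y ^ (i : ℕ)) w) ∧
      (∀ u ∈ Submodule.span ℂ (Set.range fun i : Fin (h + 1) => (Y ^ (i : ℕ)) w),
        (∀ v ∈ Submodule.span ℂ (Set.range fun i : Fin (h + 1) => (Y ^ (i : ℕ)) w),
          τ u v = 0) → u = 0) ∧
      (∀ v ∈ Submodule.span ℂ (Set.range fun i : Fin (h + 1) => (Y ^ (i : ℕ)) w),
        (∀ u ∈ Submodule.span ℂ (Set.range fun i : Fin (h + 1) => (Y ^ (i : ℕ)) w),
          τ u v = 0) → v = 0) ∧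
      (∀ i j : ℕ, h < i + j → τ ((Y ^ i) w) ((Y ^ j) w) = 0) ∧
      (∀ i j : ℕ, i + j = h →
        τ ((Y ^ i) w) ((Y ^ j) w) = (-1 : ℂ) ^ i * τ w ((Y ^ h) w)) := by
  -- basic commutation lemma
  have key : ∀ i j : ℕ, τ ((Y ^ i) w) ((Y ^ j) w) = (-1 : ℂ) ^ i * τ w ((Y ^ (i + j)) w) := by
    intro i
    induction i with
    | zero => intro j; simp
    | succ i ih =>
      intro j
      have h1 : (Y ^ (i + 1)) w = Y ((Y ^ i) w) := by
        rw [pow_succ']; rfl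
      have h2 : Y ((Y ^ j) w) = (Y ^ (j + 1)) w := by
        rw [pow_succ']; rfl
      have hs : τ (Y ((Y ^ i) w)) ((Y ^ j) w) = - τ ((Y ^ i) w) (Y ((Y ^ j) w)) :=
        eq_neg_of_add_eq_zero_left (hskew _ _)
      rw [h1, hs, h2, ih (j + 1)]
      have hnat : i + (j + 1) = i + 1 + j := by omega
      rw [hnat]; ring
  have hzero : ∀ m : ℕ, h < m → (Y ^ m) w = 0 := by
    intro m hm
    obtain ⟨k, rfl⟩ : ∃ k, m = (h + 1) + k := ⟨m - (h + 1), by omega⟩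
    rw [pow_add, hY, zero_mul]; rfl
  have keyz : ∀ i j : ℕ, h < i + j → τ ((Y ^ i) w) ((Y ^ j) w) = 0 := by
    intro i j hij
    rw [key, hzero _ hij]; simp
  have keyh : ∀ i j : ℕ, i + j = h → τ ((Y ^ i) w) ((Y ^ j) w) = (-1 : ℂ) ^ i * τ w ((Y ^ h) w) := by
    intro i j hij
    rw [key, hij]
  -- abstract coefficient-killing lemma
  have core : ∀ (g : ℕ → ℕ → ℂ), (∀ i j, h < i + j → g i j = 0) →
      (∀ k, k ≤ h → g k (h - k) ≠ 0) →
      ∀ c : Fin (h + 1) → ℂ,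
        (∀ j, j ≤ h → (∑ i : Fin (h + 1), c i * g (i : ℕ) j) = 0) →
        ∀ k, c k = 0 := by
    intro g hg0 hgd c hc k
    have main : ∀ n : ℕ, ∀ hn : n < h + 1, c ⟨n, hn⟩ = 0 := by
      intro n
      induction n using Nat.strong_induction_on with
      | _ n ih =>
        intro hn
        have hle : n ≤ h := by omega
        have heq := hc (h - n) (by omega)
        have hsingle : (∑ i : Fin (h + 1), c i * g (i : ℕ) (h - n)) =
            c ⟨n, hn⟩ * g n (h - n) := by
          refine Finset.sum_eq_single (⟨n, hn⟩ : Fin (h + 1)) ?_ (by simp)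
          intro i _ hne
          rcases lt_trichotomy (i : ℕ) n with hlt | heq' | hgt
          · have : c i = 0 := by
              have := ih (i : ℕ) hlt i.isLt
              simpa using this
            rw [this, zero_mul]
          · exact absurd (Fin.ext heq') hne
          · rw [hg0 _ _ (by omega), mul_zero]
        rw [hsingle] at heq
        exact (mul_eq_zero.mp heq).resolve_right (hgd n hle)
    have := main (k : ℕ) k.isLt
    simpa using this
  refine ⟨?_, ?_, ?_, keyz, keyh⟩
  · -- linear independence
    rw [Fintype.linearIndependent_iff]
    intro c hc
    refine core (fun i j => τ ((Y ^ i) w) ((Y ^ j) w)) keyz ?_ c ?_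
    · intro k hk
      show τ ((Y ^ k) w) ((Y ^ (h - k)) w) ≠ 0
      rw [keyh k (h - k) (by omega)]
      exact mul_ne_zero (by simp [pow_ne_zero]) hw
    · intro j hj
      have : τ (∑ i : Fin (h + 1), c i • (Y ^ (i : ℕ)) w) ((Y ^ j) w) = 0 := by
        rw [hc]; simp
      rw [map_sum] at this
      simpa [smul_eq_mul] using this
  · -- left nondegeneracy
    intro u hu htest
    obtain ⟨c, rfl⟩ := Submodule.mem_span_range_iff_exists_fun ℂ |>.mp hu
    have hcz : ∀ k, c k = 0 := by
      refine core (fun i j => τ ((Y ^ i) w) ((Y ^ j) w)) keyz ?_ c ?_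
      · intro k hk
        show τ ((Y ^ k) w) ((Y ^ (h - k)) w) ≠ 0
        rw [keyh k (h - k) (by omega)]
        exact mul_ne_zero (by simp [pow_ne_zero]) hw
      · intro j hj
        have hmem : (Y ^ j) w ∈ Submodule.span ℂ
            (Set.range fun i : Fin (h + 1) => (Y ^ (i : ℕ)) w) := by
          apply Submodule.subset_span
          exact ⟨⟨j, by omega⟩, rfl⟩
        have := htest _ hmem
        rw [map_sum] at this
        simpa [smul_eq_mul] using this
    simp [hcz]
  · -- right nondegeneracy
    intro v hv htest
    obtain ⟨c, rfl⟩ := Submodule.mem_span_range_iff_exists_fun ℂ |>.mp hv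
    have hcz : ∀ k, c k = 0 := by
      refine core (fun i j => τ ((Y ^ j) w) ((Y ^ i) w)) (fun i j hij => keyz j i (by omega)) ?_ c ?_
      · intro k hk
        show τ ((Y ^ (h - k)) w) ((Y ^ k) w) ≠ 0
        rw [keyh (h - k) k (by omega)]
        exact mul_ne_zero (by simp [pow_ne_zero]) hw
      · intro j hj
        have hmem : (Y ^ j) w ∈ Submodule.span ℂ
            (Set.range fun i : Fin (h + 1) => (Y ^ (i : ℕ)) w) := by
          apply Submodule.subset_span
          exact ⟨⟨j, by omega⟩, rfl⟩
        have := htest _ hmem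
        have h2 : τ ((Y ^ j) w) (∑ i : Fin (h + 1), c i • (Y ^ (i : ℕ)) w) = 0 := this
        rw [map_sum] at h2
        simpa [smul_eq_mul] using h2
    simp [hcz]
end

section
/- Let V be a finite-dimensional complex vector space, τ : V × V → ℂ a bilinear form that is symmetric or alternating, and Y : V → V a ℂ-linear map with τ(Yu, v) + τ(u, Yv) = 0 for all u, v. Let h be a natural number with Y^{h+1} = 0, and let w, z ∈ V satisfy τ(z, Y^h w) ≠ 0 and τ(w, Y^h w) = 0. Then the 2(h+1) vectors z, Yz, …, Y^h z, w, Yw, …, Y^h w are linearly independent, and the restriction of τ to their span is nondegenerate. -/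
/-- if `Y` is `τ`-skew with `Y^(h+1) = 0`, `τ(z, Y^h w) ≠ 0` and
`τ(w, Y^h w) = 0`, then the `2(h+1)` vectors `z, Yz, …, Y^h z, w, Yw, …, Y^h w` are
linearly independent and `τ` is nondegenerate on their span. -/
theorem two_block_span_nondegenerate
    {V : Type*} [AddCommGroup V] [Module ℂ V] [FiniteDimensional ℂ V]
    (τ : V →ₗ[ℂ] V →ₗ[ℂ] ℂ)
    (hτsa : (∀ u v : V, τ u v = τ v u) ∨ (∀ u v : V, τ u v = -(τ v u)))
    (Y : Module.End ℂ V)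
    (hskew : ∀ u v : V, τ (Y u) v + τ u (Y v) = 0)
    (h : ℕ) (hY : Y ^ (h + 1) = 0)
    (w z : V) (hz : τ z ((Y ^ h) w) ≠ 0) (hw : τ w ((Y ^ h) w) = 0) :
    LinearIndependent ℂ
      (Sum.elim (fun i : Fin (h + 1) => (Y ^ (i : ℕ)) z)
        (fun i : Fin (h + 1) => (Y ^ (i : ℕ)) w)) ∧
      (∀ u ∈ Submodule.span ℂ (Set.range
          (Sum.elim (fun i : Fin (h + 1) => (Y ^ (i : ℕ)) z)
            (fun i : Fin (h + 1) => (Y ^ (i : ℕ)) w))),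
        (∀ v ∈ Submodule.span ℂ (Set.range
            (Sum.elim (fun i : Fin (h + 1) => (Y ^ (i : ℕ)) z)
              (fun i : Fin (h + 1) => (Y ^ (i : ℕ)) w))),
          τ u v = 0) → u = 0) ∧
      (∀ v ∈ Submodule.span ℂ (Set.range
          (Sum.elim (fun i : Fin (h + 1) => (Y ^ (i : ℕ)) z)
            (fun i : Fin (h + 1) => (Y ^ (i : ℕ)) w))),
        (∀ u ∈ Submodule.span ℂ (Set.range
            (Sum.elim (fun i : Fin (h + 1) => (Y ^ (i : ℕ)) z)
              (fun i : Fin (h + 1) => (Y ^ (i : ℕ)) w))),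
          τ u v = 0) → v = 0) := by
  classical
  set f := (Sum.elim (fun i : Fin (h + 1) => (Y ^ (i : ℕ)) z)
        (fun i : Fin (h + 1) => (Y ^ (i : ℕ)) w)) with hf
  -- Y^n = 0 for n > h
  have hYn : ∀ n : ℕ, h < n → (Y ^ n : Module.End ℂ V) = 0 := by
    intro n hn
    have e : Y ^ n = Y ^ (n - (h + 1)) * Y ^ (h + 1) := by
      rw [← pow_add]; congr 1; omega
    rw [e, hY, mul_zero]
  have hskew' : ∀ u v : V, τ (Y u) v = -τ u (Y v) := fun u v =>
    eq_neg_of_add_eq_zero_left (hskew u v)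
  have pow_pair : ∀ (i j : ℕ) (u v : V),
      τ ((Y ^ i) u) ((Y ^ j) v) = (-1 : ℂ) ^ i * τ u ((Y ^ (i + j)) v) := by
    intro i
    induction i with
    | zero => intro j u v; simp
    | succ n ih =>
      intro j u v
      have h1 : (Y ^ (n + 1)) u = (Y ^ n) (Y u) := by
        rw [pow_succ]; exact Module.End.mul_apply _ _ _
      have h3 : Y ((Y ^ (n + j)) v) = (Y ^ (n + 1 + j)) v := by
        rw [show n + 1 + j = n + j + 1 by omega, pow_succ']
        exact (Module.End.mul_apply _ _ _).symm
      rw [h1, ih j (Y u) v, hskew' u ((Y ^ (n + j)) v), h3]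
      ring
  have hv0 : ∀ (i j : ℕ) (u v : V), h < i + j → τ ((Y ^ i) u) ((Y ^ j) v) = 0 := by
    intro i j u v hij
    rw [pow_pair, hYn (i + j) hij]
    simp
  set c := τ z ((Y ^ h) w) with hcdef
  set c' := τ w ((Y ^ h) z) with hc'def
  have hph : τ ((Y ^ h) z) w = (-1 : ℂ) ^ h * c := by
    have := pow_pair h 0 z w
    simpa using this
  have hc'ne : c' ≠ 0 := by
    rcases hτsa with hs | hs
    · rw [hc'def, hs w ((Y ^ h) z), hph]
      exact mul_ne_zero (pow_ne_zero _ (by norm_num)) hz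
    · rw [hc'def, hs w ((Y ^ h) z), hph]
      simp only [neg_ne_zero]
      exact mul_ne_zero (pow_ne_zero h (by norm_num)) hz
  have hwwv : ∀ i j : ℕ, h ≤ i + j → τ ((Y ^ i) w) ((Y ^ j) w) = 0 := by
    intro i j hij
    rcases eq_or_lt_of_le hij with heq | hlt
    · rw [pow_pair, ← heq, hw, mul_zero]
    · exact hv0 i j w w hlt
  have hzwh : ∀ i j : ℕ, i + j = h → τ ((Y ^ i) z) ((Y ^ j) w) = (-1:ℂ)^i * c := by
    intro i j hij; rw [pow_pair, hij]
  have hwzh : ∀ i j : ℕ, i + j = h → τ ((Y ^ i) w) ((Y ^ j) z) = (-1:ℂ)^i * c' := by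
    intro i j hij; rw [pow_pair, hij]
  -- the key coefficient lemma
  have key : ∀ (a b : Fin (h + 1) → ℂ),
      (∀ j : Fin (h + 1), τ ((Y ^ (j:ℕ)) z)
        ((∑ i : Fin (h+1), a i • (Y ^ (i:ℕ)) z) + ∑ i : Fin (h+1), b i • (Y ^ (i:ℕ)) w) = 0) →
      (∀ j : Fin (h + 1), τ ((Y ^ (j:ℕ)) w)
        ((∑ i : Fin (h+1), a i • (Y ^ (i:ℕ)) z) + ∑ i : Fin (h+1), b i • (Y ^ (i:ℕ)) w) = 0) →
      ∀ i, a i = 0 ∧ b i = 0 := by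
    intro a b Hz Hw
    have Hz' : ∀ j : Fin (h+1),
        (∑ i : Fin (h+1), a i * τ ((Y ^ (j:ℕ)) z) ((Y ^ (i:ℕ)) z)) +
        (∑ i : Fin (h+1), b i * τ ((Y ^ (j:ℕ)) z) ((Y ^ (i:ℕ)) w)) = 0 := by
      intro j
      have := Hz j
      simpa [map_add, map_sum, map_smul, smul_eq_mul] using this
    have Hw' : ∀ j : Fin (h+1),
        (∑ i : Fin (h+1), a i * τ ((Y ^ (j:ℕ)) w) ((Y ^ (i:ℕ)) z)) +
        (∑ i : Fin (h+1), b i * τ ((Y ^ (j:ℕ)) w) ((Y ^ (i:ℕ)) w)) = 0 := by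
      intro j
      have := Hw j
      simpa [map_add, map_sum, map_smul, smul_eq_mul] using this
    have main : ∀ k : ℕ, ∀ i : Fin (h+1), (i:ℕ) < k → a i = 0 ∧ b i = 0 := by
      intro k
      induction k with
      | zero => intro i hi; omega
      | succ k ih =>
        intro i hi
        rcases Nat.lt_or_ge (i:ℕ) k with hik | hik
        · exact ih i hik
        have hik' : (i:ℕ) = k := by omega
        have hkh : k ≤ h := by omega
        set j : Fin (h+1) := ⟨h - k, by omega⟩ with hj
        have hjv : (j:ℕ) = h - k := rfl
        have ha : a i = 0 := by
          have H := Hw' j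
          have e1 : (∑ i' : Fin (h+1), a i' * τ ((Y ^ (j:ℕ)) w) ((Y ^ (i':ℕ)) z))
              = a i * ((-1:ℂ)^(h-k) * c') := by
            rw [Finset.sum_eq_single i]
            · rw [hjv, hwzh (h-k) (i:ℕ) (by omega)]
            · intro i' _ hne
              rcases Nat.lt_or_ge (i':ℕ) k with h1 | h1
              · rw [(ih i' h1).1, zero_mul]
              · have : k < (i':ℕ) := by
                  rcases Nat.eq_or_lt_of_le h1 with h2 | h2
                  · exact absurd (Fin.ext (by omega)) hne
                  · exact h2
                rw [hjv, hv0 (h-k) (i':ℕ) w z (by omega), mul_zero]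
            · intro hni; exact absurd (Finset.mem_univ i) hni
          have e2 : (∑ i' : Fin (h+1), b i' * τ ((Y ^ (j:ℕ)) w) ((Y ^ (i':ℕ)) w)) = 0 := by
            apply Finset.sum_eq_zero
            intro i' _
            rcases Nat.lt_or_ge (i':ℕ) k with h1 | h1
            · rw [(ih i' h1).2, zero_mul]
            · rw [hjv, hwwv (h-k) (i':ℕ) (by omega), mul_zero]
          rw [e1, e2, add_zero] at H
          rcases mul_eq_zero.mp H with h1 | h1
          · exact h1
          · exact absurd h1 (mul_ne_zero (pow_ne_zero _ (by norm_num)) hc'ne)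
        have hb : b i = 0 := by
          have H := Hz' j
          have e1 : (∑ i' : Fin (h+1), a i' * τ ((Y ^ (j:ℕ)) z) ((Y ^ (i':ℕ)) z)) = 0 := by
            apply Finset.sum_eq_zero
            intro i' _
            rcases Nat.lt_or_ge (i':ℕ) k with h1 | h1
            · rw [(ih i' h1).1, zero_mul]
            · rcases Nat.eq_or_lt_of_le h1 with h2 | h2
              · have : i' = i := Fin.ext (by omega)
                rw [this, ha, zero_mul]
              · rw [hjv, hv0 (h-k) (i':ℕ) z z (by omega), mul_zero]
          have e2 : (∑ i' : Fin (h+1), b i' * τ ((Y ^ (j:ℕ)) z) ((Y ^ (i':ℕ)) w))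
              = b i * ((-1:ℂ)^(h-k) * c) := by
            rw [Finset.sum_eq_single i]
            · rw [hjv, hzwh (h-k) (i:ℕ) (by omega)]
            · intro i' _ hne
              rcases Nat.lt_or_ge (i':ℕ) k with h1 | h1
              · rw [(ih i' h1).2, zero_mul]
              · have : k < (i':ℕ) := by
                  rcases Nat.eq_or_lt_of_le h1 with h2 | h2
                  · exact absurd (Fin.ext (by omega)) hne
                  · exact h2
                rw [hjv, hv0 (h-k) (i':ℕ) z w (by omega), mul_zero]
            · intro hni; exact absurd (Finset.mem_univ i) hni
          rw [e1, e2, zero_add] at H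
          rcases mul_eq_zero.mp H with h1 | h1
          · exact h1
          · exact absurd h1 (mul_ne_zero (pow_ne_zero _ (by norm_num)) hz)
        exact ⟨ha, hb⟩
    exact fun i => main (h+1) i i.isLt
  -- right nondegeneracy
  have hmemz : ∀ j : Fin (h+1), (Y ^ (j:ℕ)) z ∈ Submodule.span ℂ (Set.range f) :=
    fun j => Submodule.subset_span ⟨Sum.inl j, rfl⟩
  have hmemw : ∀ j : Fin (h+1), (Y ^ (j:ℕ)) w ∈ Submodule.span ℂ (Set.range f) :=
    fun j => Submodule.subset_span ⟨Sum.inr j, rfl⟩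
  have right : ∀ v ∈ Submodule.span ℂ (Set.range f),
      (∀ u ∈ Submodule.span ℂ (Set.range f), τ u v = 0) → v = 0 := by
    intro v hv hvu
    rw [Submodule.mem_span_range_iff_exists_fun] at hv
    obtain ⟨g, hg⟩ := hv
    have hsum : (∑ i : Fin (h+1), g (Sum.inl i) • (Y ^ (i:ℕ)) z)
        + ∑ i : Fin (h+1), g (Sum.inr i) • (Y ^ (i:ℕ)) w = v := by
      rw [← hg, Fintype.sum_sum_type]
      simp [hf]
    have hcoef := key (fun i => g (Sum.inl i)) (fun i => g (Sum.inr i))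
      (fun j => by rw [hsum]; exact hvu _ (hmemz j))
      (fun j => by rw [hsum]; exact hvu _ (hmemw j))
    rw [← hsum]
    rw [Finset.sum_eq_zero (fun i _ => by
          have h0 : g (Sum.inl i) = 0 := (hcoef i).1
          rw [h0, zero_smul]),
        Finset.sum_eq_zero (fun i _ => by
          have h0 : g (Sum.inr i) = 0 := (hcoef i).2
          rw [h0, zero_smul]), add_zero]
  refine ⟨?_, ?_, right⟩
  · rw [Fintype.linearIndependent_iff]
    intro g hg
    have hsum : (∑ i : Fin (h+1), g (Sum.inl i) • (Y ^ (i:ℕ)) z)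
        + ∑ i : Fin (h+1), g (Sum.inr i) • (Y ^ (i:ℕ)) w = 0 := by
      rw [← hg, Fintype.sum_sum_type]
      simp [hf]
    have hcoef := key (fun i => g (Sum.inl i)) (fun i => g (Sum.inr i))
      (fun j => by rw [hsum, map_zero])
      (fun j => by rw [hsum, map_zero])
    intro i
    cases i with
    | inl i => exact (hcoef i).1
    | inr i => exact (hcoef i).2
  · intro u hu huv
    refine right u hu ?_
    intro u' hu'
    rcases hτsa with hs | hs
    · rw [← hs u u']; exact huv u' hu'
    · rw [hs u' u, huv u' hu', neg_zero]
end

section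
/- Let W be a finite-dimensional complex vector space, τ : W × W → ℂ a nondegenerate bilinear form that is symmetric or alternating, and Y : W → W a ℂ-linear map with τ(Yu, v) + τ(u, Yv) = 0 for all u, v. Let h be a natural number with Y^h ≠ 0, Y^{h+1} = 0, and Y(W) = ker(Y^h) (Y is uniform of height h). Then: (i) τ(u, Y^h v) = (−1)^h τ(Y^h u, v) for all u, v ∈ W; (ii) the formula τ̄(u + Y(W), v + Y(W)) := τ(u, Y^h v) gives a well-defined bilinear form τ̄ on the quotient space W / Y(W); (iii) τ̄ is nondegenerate; and (iv) τ̄ is symmetric if h is even and τ is symmetric, or h is odd and τ is alternating; otherwise τ̄ is alternating. -/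
/-- for a uniform nilpotent `τ`-skew endomorphism `Y` of height `h`, the
formula `τ̄(ū, v̄) = τ(u, Y^h v)` induces a well-defined nondegenerate bilinear form on
the quotient `W / Y(W)`, which is symmetric if (`h` even and `τ` symmetric) or (`h` odd
and `τ` alternating) and alternating otherwise. -/
theorem reduced_form_on_quotient
    {W : Type*} [AddCommGroup W] [Module ℂ W] [FiniteDimensional ℂ W]
    (τ : W →ₗ[ℂ] W →ₗ[ℂ] ℂ)
    (hτl : ∀ u : W, (∀ v : W, τ u v = 0) → u = 0)
    (hτr : ∀ v : W, (∀ u : W, τ u v = 0) → v = 0)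
    (hτsa : (∀ u v : W, τ u v = τ v u) ∨ (∀ u v : W, τ u v = -(τ v u)))
    (Y : Module.End ℂ W)
    (hskew : ∀ u v : W, τ (Y u) v + τ u (Y v) = 0)
    (h : ℕ) (hYh : Y ^ h ≠ 0) (hYh1 : Y ^ (h + 1) = 0)
    (huniform : LinearMap.range Y = LinearMap.ker (Y ^ h)) :
    (∀ u v : W, τ u ((Y ^ h) v) = (-1 : ℂ) ^ h * τ ((Y ^ h) u) v) ∧
      ∃ τb : (W ⧸ LinearMap.range Y) →ₗ[ℂ] (W ⧸ LinearMap.range Y) →ₗ[ℂ] ℂ,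
        (∀ u v : W,
          τb (Submodule.Quotient.mk u) (Submodule.Quotient.mk v) = τ u ((Y ^ h) v)) ∧
        (∀ x : W ⧸ LinearMap.range Y, (∀ y, τb x y = 0) → x = 0) ∧
        (∀ y : W ⧸ LinearMap.range Y, (∀ x, τb x y = 0) → y = 0) ∧
        (((Even h ∧ (∀ u v : W, τ u v = τ v u)) ∨
            (Odd h ∧ (∀ u v : W, τ u v = -(τ v u)))) →
          ∀ x y, τb x y = τb y x) ∧
        (((Even h ∧ (∀ u v : W, τ u v = -(τ v u))) ∨
            (Odd h ∧ (∀ u v : W, τ u v = τ v u))) →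
          ∀ x y, τb x y = -(τb y x)) := by
  -- skew rule for a single Y
  have hsk : ∀ u v : W, τ u (Y v) = -(τ (Y u) v) := by
    intro u v
    have := hskew u v
    linear_combination this
  -- part (i) by induction, for all k
  have key : ∀ k : ℕ, ∀ u v : W, τ u ((Y ^ k) v) = (-1 : ℂ) ^ k * τ ((Y ^ k) u) v := by
    intro k
    induction k with
    | zero => intro u v; simp
    | succ n ih =>
      intro u v
      have h1 : (Y ^ (n + 1)) v = (Y ^ n) (Y v) := by
        rw [pow_succ]; rfl
      have h2 : (Y ^ (n + 1)) u = Y ((Y ^ n) u) := by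
        rw [pow_succ']; rfl
      rw [h1, ih u (Y v), hsk ((Y ^ n) u) v, h2]
      ring
  have keyh := key h
  refine ⟨keyh, ?_⟩
  set R := LinearMap.range Y with hR
  -- the bilinear map u v ↦ τ u (Y^h v)
  set g : W →ₗ[ℂ] W →ₗ[ℂ] ℂ := τ.compl₂ (Y ^ h) with hg
  have hgapp : ∀ u v : W, g u v = τ u ((Y ^ h) v) := fun u v => rfl
  -- first argument vanishes on R
  have hker1 : R ≤ LinearMap.ker g := by
    rintro u ⟨w, rfl⟩
    rw [LinearMap.mem_ker]
    ext v
    have : (Y ^ (h + 1)) v = 0 := by rw [hYh1]; rfl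
    have h3 : Y ((Y ^ h) v) = (Y ^ (h + 1)) v := by rw [pow_succ']; rfl
    have := hskew w ((Y ^ h) v)
    simp only [hgapp, LinearMap.zero_apply]
    have h4 : τ w (Y ((Y ^ h) v)) = 0 := by
      rw [h3, ‹(Y ^ (h+1)) v = 0›]; simp
    linear_combination this - h4
  set g1 : (W ⧸ R) →ₗ[ℂ] W →ₗ[ℂ] ℂ := Submodule.liftQ R g hker1 with hg1
  have hg1app : ∀ u v : W, g1 (Submodule.Quotient.mk u) v = τ u ((Y ^ h) v) :=
    fun u v => rfl
  have hker2 : R ≤ LinearMap.ker g1.flip := by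
    rintro v hv
    have hv' : v ∈ LinearMap.ker (Y ^ h) := huniform ▸ hv
    rw [LinearMap.mem_ker] at hv' ⊢
    ext x
    show g1 (Submodule.Quotient.mk x) v = 0
    rw [hg1app, hv']
    simp
  set τb : (W ⧸ R) →ₗ[ℂ] (W ⧸ R) →ₗ[ℂ] ℂ :=
    (Submodule.liftQ R g1.flip hker2).flip with hτb
  have hτbapp : ∀ u v : W,
      τb (Submodule.Quotient.mk u) (Submodule.Quotient.mk v) = τ u ((Y ^ h) v) :=
    fun u v => rfl
  have hneg : ((-1 : ℂ) ^ h) ≠ 0 := by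
    simp
  refine ⟨τb, hτbapp, ?_, ?_, ?_, ?_⟩
  · -- left nondegeneracy
    intro x hx
    obtain ⟨u, rfl⟩ := Submodule.Quotient.mk_surjective R x
    rw [Submodule.Quotient.mk_eq_zero]
    have hYu : (Y ^ h) u = 0 := by
      apply hτl
      intro v
      have := hx (Submodule.Quotient.mk v)
      rw [hτbapp, keyh] at this
      exact (mul_eq_zero.mp this).resolve_left hneg
    show u ∈ R
    rw [huniform, LinearMap.mem_ker]
    exact hYu
  · -- right nondegeneracy
    intro y hy
    obtain ⟨v, rfl⟩ := Submodule.Quotient.mk_surjective R y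
    rw [Submodule.Quotient.mk_eq_zero]
    have hYv : (Y ^ h) v = 0 := by
      apply hτr
      intro u
      have := hy (Submodule.Quotient.mk u)
      rw [hτbapp] at this
      exact this
    show v ∈ R
    rw [huniform, LinearMap.mem_ker]
    exact hYv
  · -- symmetric case
    rintro (⟨heven, hsym⟩ | ⟨hodd, halt⟩) x y <;>
      obtain ⟨u, rfl⟩ := Submodule.Quotient.mk_surjective R x <;>
      obtain ⟨v, rfl⟩ := Submodule.Quotient.mk_surjective R y <;>
      rw [hτbapp, hτbapp]
    · rw [keyh v u, hsym u ((Y ^ h) v), heven.neg_one_pow, one_mul]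
    · rw [keyh v u, halt ((Y ^ h) v) u, hodd.neg_one_pow]
      ring
  · -- alternating case
    rintro (⟨heven, halt⟩ | ⟨hodd, hsym⟩) x y <;>
      obtain ⟨u, rfl⟩ := Submodule.Quotient.mk_surjective R x <;>
      obtain ⟨v, rfl⟩ := Submodule.Quotient.mk_surjective R y <;>
      rw [hτbapp, hτbapp]
    · rw [keyh v u, halt ((Y ^ h) v) u, heven.neg_one_pow]
      ring
    · rw [keyh v u, hsym u ((Y ^ h) v), hodd.neg_one_pow]
      ring
end

section
/- Fix n ≥ 1 and let T̃ be an invertible symmetric n × n real matrix. Let T be the (n+2) × (n+2) symmetric matrix in block form [[0, 0, 1], [0, T̃, 0], [1, 0, 0]] (blocks of sizes 1, n, 1), and let e_{n+2} ∈ ℝ^{n+2} be the last standard basis vector. Then the stabilizer { g ∈ GL(n+2, ℝ) : gᵀ T g = T and g·e_{n+2} = e_{n+2} } consists exactly of the matrices [[1, 0, 0], [d, A, 0], [−(1/2)·dᵀT̃d, −dᵀT̃A, 1]] with A ∈ O(T̃) := { A ∈ GL(n, ℝ) : AᵀT̃A = T̃ } and d ∈ ℝⁿ, and the map sending the affine orthogonal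 transformation x ↦ Ax + d of (ℝⁿ, T̃) to this matrix is a group isomorphism from the affine orthogonal group ℝⁿ ⋊ O(T̃) onto this stabilizer. -/
/-!
An element `g` of the stabilizer has last column `e_{n+2}`, and pairing that column with the
others through `T` shows that the first row of `g` is `e₁ᵀ`. Given these zeros, the remaining
entries of `gᵀTg = T` say that the middle block `A` is `T̃`-orthogonal and determine the bottom
row from `A` and the translation column `d`. So every element of the stabilizer is the matrix of
its pair `(A, d)`; as the stabilizer is closed under products, the multiplication rule only has
to be checked on the `A`- and `d`-blocks, where it is the composition of affine maps.
-/

open Matrix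

/-- The symmetric bilinear form `[[0,0,1],[0,T̃,0],[1,0,0]]` on `ℝ^(n+2)`
(realized as `(Fin 1 ⊕ (Fin n ⊕ Fin 1)) → ℝ`). -/
def extendedForm (n : ℕ) (Tt : Matrix (Fin n) (Fin n) ℝ) :
    Matrix (Fin 1 ⊕ (Fin n ⊕ Fin 1)) (Fin 1 ⊕ (Fin n ⊕ Fin 1)) ℝ :=
  Matrix.of fun i j =>
    match i, j with
    | Sum.inl _, Sum.inr (Sum.inr _) => 1
    | Sum.inr (Sum.inl i), Sum.inr (Sum.inl j) => Tt i j
    | Sum.inr (Sum.inr _), Sum.inl _ => 1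
    | _, _ => 0

/-- The matrix `[[1,0,0],[d,A,0],[−(1/2)dᵀT̃d, −dᵀT̃A, 1]]` associated to the affine
orthogonal transformation `x ↦ Ax + d` of `(ℝⁿ, T̃)`. -/
noncomputable def affOrthMatrix (n : ℕ) (Tt A : Matrix (Fin n) (Fin n) ℝ) (d : Fin n → ℝ) :
    Matrix (Fin 1 ⊕ (Fin n ⊕ Fin 1)) (Fin 1 ⊕ (Fin n ⊕ Fin 1)) ℝ :=
  Matrix.of fun i j =>
    match i, j with
    | Sum.inl _, Sum.inl _ => 1
    | Sum.inl _, _ => 0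
    | Sum.inr (Sum.inl i), Sum.inl _ => d i
    | Sum.inr (Sum.inl i), Sum.inr (Sum.inl j) => A i j
    | Sum.inr (Sum.inl _), Sum.inr (Sum.inr _) => 0
    | Sum.inr (Sum.inr _), Sum.inl _ => -(1 / 2 : ℝ) * (d ⬝ᵥ (Tt *ᵥ d))
    | Sum.inr (Sum.inr _), Sum.inr (Sum.inl j) => -((d ᵥ* (Tt * A)) j)
    | Sum.inr (Sum.inr _), Sum.inr (Sum.inr _) => 1

/-- The last standard basis vector of `ℝ^(n+2)`. -/
def lastVec (n : ℕ) : (Fin 1 ⊕ (Fin n ⊕ Fin 1)) → ℝ :=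
  Sum.elim (fun _ => 0) (Sum.elim (fun _ => 0) (fun _ => 1))

theorem Matrix.transpose_mul_mul_apply {m k R : Type*} [Fintype m] [Semiring R]
    (M : Matrix m k R) (B : Matrix m m R) (i j : k) :
    (Mᵀ * B * M) i j = Mᵀ i ⬝ᵥ (B *ᵥ Mᵀ j) := by
  rw [Matrix.mul_assoc, mul_apply']
  rfl

theorem Matrix.dotProduct_mulVec_comm_of_transpose_eq {m R : Type*} [Fintype m] [CommSemiring R]
    {B : Matrix m m R} (hB : Bᵀ = B) (u v : m → R) :
    u ⬝ᵥ (B *ᵥ v) = v ⬝ᵥ (B *ᵥ u) := by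
  rw [dotProduct_mulVec, ← mulVec_transpose, hB, dotProduct_comm]

theorem Matrix.vecMul_mul_apply {m k R : Type*} [Fintype m] [NonUnitalSemiring R]
    (v : m → R) (B : Matrix m m R) (A : Matrix m k R) (j : k) :
    (v ᵥ* (B * A)) j = v ⬝ᵥ (B *ᵥ Aᵀ j) := by
  rw [← vecMul_vecMul, dotProduct_mulVec]
  rfl

theorem Matrix.transpose_mul_mul_of_transpose_mul_mul_eq {m R : Type*} [Fintype m]
    [CommSemiring R] {M N B : Matrix m m R} (hM : Mᵀ * B * M = B) :
    (M * N)ᵀ * B * (M * N) = Nᵀ * B * N := by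
  calc (M * N)ᵀ * B * (M * N) = Nᵀ * (Mᵀ * B * M) * N := by
        simp only [transpose_mul, Matrix.mul_assoc]
    _ = Nᵀ * B * N := by rw [hM]

theorem Matrix.isUnit_of_transpose_mul_mul_eq {m R : Type*} [Fintype m] [DecidableEq m]
    [CommRing R] {A T : Matrix m m R} (hT : IsUnit T) (h : Aᵀ * T * A = T) : IsUnit A := by
  have hdet : T.det * (A.det * A.det) = T.det * 1 := by
    have := congrArg det h
    rw [det_mul, det_mul, det_transpose] at this
    linear_combination this
  have hTdet : IsUnit T.det := (isUnit_iff_isUnit_det T).mp hT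
  exact (isUnit_iff_isUnit_det A).mpr (.of_mul_eq_one _ (hTdet.mul_left_cancel hdet))

section AffOrthMatrix

open Sum

variable {n : ℕ}

theorem transpose_mul_extendedForm_mul_apply (Tt : Matrix (Fin n) (Fin n) ℝ)
    (M : Matrix (Fin 1 ⊕ (Fin n ⊕ Fin 1)) (Fin 1 ⊕ (Fin n ⊕ Fin 1)) ℝ)
    (i j : Fin 1 ⊕ (Fin n ⊕ Fin 1)) :
    (Mᵀ * extendedForm n Tt * M) i j =
      M (inl 0) i * M (inr (inr 0)) j
        + (fun a => M (inr (inl a)) i) ⬝ᵥ (Tt *ᵥ fun a => M (inr (inl a)) j)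
        + M (inr (inr 0)) i * M (inl 0) j := by
  rw [transpose_mul_mul_apply]
  simp only [dotProduct, transpose_apply, mulVec, extendedForm, of_apply, Fintype.sum_sum_type,
    Finset.univ_unique, Fin.default_eq_zero, Finset.sum_singleton, zero_mul, Finset.sum_const_zero,
    one_mul, zero_add, add_zero]
  ring

def linearPart (M : Matrix (Fin 1 ⊕ (Fin n ⊕ Fin 1)) (Fin 1 ⊕ (Fin n ⊕ Fin 1)) ℝ) :
    Matrix (Fin n) (Fin n) ℝ :=
  M.submatrix (inr ∘ inl) (inr ∘ inl)

def translationPart (M : Matrix (Fin 1 ⊕ (Fin n ⊕ Fin 1)) (Fin 1 ⊕ (Fin n ⊕ Fin 1)) ℝ) :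
    Fin n → ℝ :=
  fun i => M (inr (inl i)) (inl 0)

variable {Tt : Matrix (Fin n) (Fin n) ℝ}

@[simp]
theorem linearPart_affOrthMatrix (A : Matrix (Fin n) (Fin n) ℝ) (d : Fin n → ℝ) :
    linearPart (affOrthMatrix n Tt A d) = A := by
  ext i j
  rfl

@[simp]
theorem translationPart_affOrthMatrix (A : Matrix (Fin n) (Fin n) ℝ) (d : Fin n → ℝ) :
    translationPart (affOrthMatrix n Tt A d) = d := by
  ext i
  rfl

theorem linearPart_affOrthMatrix_mul (A₁ A₂ : Matrix (Fin n) (Fin n) ℝ) (d₁ d₂ : Fin n → ℝ) :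
    linearPart (affOrthMatrix n Tt A₂ d₂ * affOrthMatrix n Tt A₁ d₁) = A₂ * A₁ := by
  ext i j
  simp [linearPart, affOrthMatrix, mul_apply, Fintype.sum_sum_type]

theorem translationPart_affOrthMatrix_mul (A₁ A₂ : Matrix (Fin n) (Fin n) ℝ)
    (d₁ d₂ : Fin n → ℝ) :
    translationPart (affOrthMatrix n Tt A₂ d₂ * affOrthMatrix n Tt A₁ d₁) = A₂ *ᵥ d₁ + d₂ := by
  ext i
  simp only [translationPart, affOrthMatrix, mulVec, dotProduct, mul_apply, of_apply,
    Fintype.sum_sum_type, Finset.univ_unique, Fin.default_eq_zero, Finset.sum_singleton, mul_one,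
    zero_mul, Finset.sum_const_zero, add_zero, Pi.add_apply]
  ring

theorem affOrthMatrix_mulVec_lastVec (A : Matrix (Fin n) (Fin n) ℝ) (d : Fin n → ℝ) :
    affOrthMatrix n Tt A d *ᵥ lastVec n = lastVec n := by
  ext i
  rcases i with i | i | i <;>
    simp [affOrthMatrix, lastVec, mulVec, dotProduct, Fintype.sum_sum_type]

theorem affOrthMatrix_transpose_mul_mul (hTsym : Ttᵀ = Tt) {A : Matrix (Fin n) (Fin n) ℝ}
    (hA : Aᵀ * Tt * A = Tt) (d : Fin n → ℝ) :
    (affOrthMatrix n Tt A d)ᵀ * extendedForm n Tt * affOrthMatrix n Tt A d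
      = extendedForm n Tt := by
  ext i j
  rw [transpose_mul_extendedForm_mul_apply]
  rcases i with i | i | i <;> rcases j with j | j | j <;>
    simp only [affOrthMatrix, extendedForm, of_apply, one_div, neg_mul, mul_neg, one_mul, mul_one,
      mul_zero, zero_mul, neg_zero, add_zero, zero_add, zero_dotProduct']
  · ring
  · rw [vecMul_mul_apply]
    exact neg_add_cancel _
  · simp [mulVec, dotProduct]
  · rw [vecMul_mul_apply, dotProduct_mulVec_comm_of_transpose_eq hTsym]
    exact add_neg_cancel _
  · exact (transpose_mul_mul_apply A Tt i j).symm.trans (congrFun₂ hA i j)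
  · simp [mulVec, dotProduct]

section Stabilizer

variable {M : Matrix (Fin 1 ⊕ (Fin n ⊕ Fin 1)) (Fin 1 ⊕ (Fin n ⊕ Fin 1)) ℝ}

theorem apply_last_column_of_mulVec_lastVec (He : M *ᵥ lastVec n = lastVec n)
    (i : Fin 1 ⊕ (Fin n ⊕ Fin 1)) : M i (inr (inr 0)) = lastVec n i := by
  simpa [mulVec, dotProduct, lastVec, Fintype.sum_sum_type] using congrFun He i

theorem apply_first_row_of_stab (H : Mᵀ * extendedForm n Tt * M = extendedForm n Tt)
    (He : M *ᵥ lastVec n = lastVec n) (j : Fin 1 ⊕ (Fin n ⊕ Fin 1)) :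
    M (inl 0) j = extendedForm n Tt (inr (inr 0)) j := by
  have := congrFun₂ H (inr (inr 0)) j
  simpa [transpose_mul_extendedForm_mul_apply, apply_last_column_of_mulVec_lastVec He, lastVec] using this

theorem linearPart_transpose_mul_mul (H : Mᵀ * extendedForm n Tt * M = extendedForm n Tt)
    (He : M *ᵥ lastVec n = lastVec n) :
    (linearPart M)ᵀ * Tt * linearPart M = Tt := by
  ext i j
  have := congrFun₂ H (inr (inl i)) (inr (inl j))
  rw [transpose_mul_extendedForm_mul_apply] at this
  simp only [apply_first_row_of_stab H He, extendedForm, of_apply, zero_mul, zero_add, mul_zero,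
    add_zero] at this
  rw [transpose_mul_mul_apply]
  exact this

theorem eq_affOrthMatrix_of_stab (H : Mᵀ * extendedForm n Tt * M = extendedForm n Tt)
    (He : M *ᵥ lastVec n = lastVec n) :
    M = affOrthMatrix n Tt (linearPart M) (translationPart M) := by
  have hentry (i j : Fin 1 ⊕ (Fin n ⊕ Fin 1)) :=
    (transpose_mul_extendedForm_mul_apply Tt M i j).symm.trans (congrFun₂ H i j)
  have hcorner : M (inr (inr 0)) (inl 0) =
      -(1 / 2) * (translationPart M ⬝ᵥ (Tt *ᵥ translationPart M)) := by
    have := hentry (inl 0) (inl 0)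
    simp only [apply_first_row_of_stab H He, extendedForm, of_apply, one_mul, mul_one] at this
    unfold translationPart
    linear_combination this / 2
  have hbottom (j : Fin n) :
      M (inr (inr 0)) (inr (inl j)) = -(translationPart M ᵥ* (Tt * linearPart M)) j := by
    have := hentry (inl 0) (inr (inl j))
    simp only [apply_first_row_of_stab H He, extendedForm, of_apply, one_mul, mul_zero, add_zero] at this
    rw [vecMul_mul_apply]
    exact eq_neg_of_add_eq_zero_left this
  ext i j
  rcases i with i | i | i <;> rcases j with j | j | j <;>
    simp [affOrthMatrix, apply_first_row_of_stab H He, apply_last_column_of_mulVec_lastVec He, extendedForm,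
      lastVec, linearPart, translationPart, hcorner, hbottom, Fin.fin_one_eq_zero]

theorem affOrthMatrix_mul (hTsym : Ttᵀ = Tt) {A₁ A₂ : Matrix (Fin n) (Fin n) ℝ}
    (h₁ : A₁ᵀ * Tt * A₁ = Tt) (h₂ : A₂ᵀ * Tt * A₂ = Tt) (d₁ d₂ : Fin n → ℝ) :
    affOrthMatrix n Tt A₂ d₂ * affOrthMatrix n Tt A₁ d₁ =
      affOrthMatrix n Tt (A₂ * A₁) (A₂ *ᵥ d₁ + d₂) := by
  have hform : (affOrthMatrix n Tt A₂ d₂ * affOrthMatrix n Tt A₁ d₁)ᵀ * extendedForm n Tt *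
      (affOrthMatrix n Tt A₂ d₂ * affOrthMatrix n Tt A₁ d₁) = extendedForm n Tt := by
    rw [transpose_mul_mul_of_transpose_mul_mul_eq (affOrthMatrix_transpose_mul_mul hTsym h₂ d₂),
      affOrthMatrix_transpose_mul_mul hTsym h₁ d₁]
  have hfix : (affOrthMatrix n Tt A₂ d₂ * affOrthMatrix n Tt A₁ d₁) *ᵥ lastVec n = lastVec n := by
    rw [← mulVec_mulVec, affOrthMatrix_mulVec_lastVec, affOrthMatrix_mulVec_lastVec]
  rw [eq_affOrthMatrix_of_stab hform hfix, linearPart_affOrthMatrix_mul,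
    translationPart_affOrthMatrix_mul]

end Stabilizer

end AffOrthMatrix

theorem affine_orthogonal_group_as_stabilizer_general (n : ℕ)
    (Tt : Matrix (Fin n) (Fin n) ℝ) (hTsym : Ttᵀ = Tt) (hTinv : IsUnit Tt) :
    (∀ g : GL (Fin 1 ⊕ (Fin n ⊕ Fin 1)) ℝ,
      ((g : Matrix _ _ ℝ)ᵀ * extendedForm n Tt * (g : Matrix _ _ ℝ) = extendedForm n Tt ∧
          (g : Matrix _ _ ℝ) *ᵥ lastVec n = lastVec n) ↔
        ∃ (A : Matrix (Fin n) (Fin n) ℝ) (d : Fin n → ℝ),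
          IsUnit A ∧ Aᵀ * Tt * A = Tt ∧
          (g : Matrix _ _ ℝ) = affOrthMatrix n Tt A d) ∧
    (∀ (A₁ A₂ : Matrix (Fin n) (Fin n) ℝ) (d₁ d₂ : Fin n → ℝ),
      IsUnit A₁ → A₁ᵀ * Tt * A₁ = Tt → IsUnit A₂ → A₂ᵀ * Tt * A₂ = Tt →
      affOrthMatrix n Tt A₂ d₂ * affOrthMatrix n Tt A₁ d₁ =
        affOrthMatrix n Tt (A₂ * A₁) (A₂ *ᵥ d₁ + d₂)) ∧
    (∀ (A A' : Matrix (Fin n) (Fin n) ℝ) (d d' : Fin n → ℝ),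
      affOrthMatrix n Tt A d = affOrthMatrix n Tt A' d' → A = A' ∧ d = d') := by
  refine ⟨fun g => ⟨fun ⟨H, He⟩ => ?_, ?_⟩, ?_, ?_⟩
  · have hA := linearPart_transpose_mul_mul H He
    exact ⟨linearPart g, translationPart g, isUnit_of_transpose_mul_mul_eq hTinv hA, hA,
      eq_affOrthMatrix_of_stab H He⟩
  · rintro ⟨A, d, -, hA, hg⟩
    rw [hg]
    exact ⟨affOrthMatrix_transpose_mul_mul hTsym hA d, affOrthMatrix_mulVec_lastVec A d⟩
  · intro A₁ A₂ d₁ d₂ _ h₁ _ h₂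
    exact affOrthMatrix_mul hTsym h₁ h₂ d₁ d₂
  · intro A A' d d' h
    exact ⟨by simpa using congrArg linearPart h, by simpa using congrArg translationPart h⟩

/-- the stabilizer of the last standard basis vector in the orthogonal
group of the form `T = [[0,0,1],[0,T̃,0],[1,0,0]]` consists exactly of the matrices
`[[1,0,0],[d,A,0],[−(1/2)dᵀT̃d, −dᵀT̃A, 1]]` with `A ∈ O(T̃)` and `d ∈ ℝⁿ`, and the map
sending the affine orthogonal transformation `x ↦ Ax + d` to this matrix is a group
isomorphism from the affine orthogonal group `ℝⁿ ⋊ O(T̃)` onto this stabilizer. -/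
theorem affine_orthogonal_group_as_stabilizer (n : ℕ) (hn : 1 ≤ n)
    (Tt : Matrix (Fin n) (Fin n) ℝ) (hTsym : Ttᵀ = Tt) (hTinv : IsUnit Tt) :
    (∀ g : GL (Fin 1 ⊕ (Fin n ⊕ Fin 1)) ℝ,
      ((g : Matrix _ _ ℝ)ᵀ * extendedForm n Tt * (g : Matrix _ _ ℝ) = extendedForm n Tt ∧
          (g : Matrix _ _ ℝ) *ᵥ lastVec n = lastVec n) ↔
        ∃ (A : Matrix (Fin n) (Fin n) ℝ) (d : Fin n → ℝ),
          IsUnit A ∧ Aᵀ * Tt * A = Tt ∧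
          (g : Matrix _ _ ℝ) = affOrthMatrix n Tt A d) ∧
    (∀ (A₁ A₂ : Matrix (Fin n) (Fin n) ℝ) (d₁ d₂ : Fin n → ℝ),
      IsUnit A₁ → A₁ᵀ * Tt * A₁ = Tt → IsUnit A₂ → A₂ᵀ * Tt * A₂ = Tt →
      affOrthMatrix n Tt A₂ d₂ * affOrthMatrix n Tt A₁ d₁ =
        affOrthMatrix n Tt (A₂ * A₁) (A₂ *ᵥ d₁ + d₂)) ∧
    (∀ (A A' : Matrix (Fin n) (Fin n) ℝ) (d d' : Fin n → ℝ),
      affOrthMatrix n Tt A d = affOrthMatrix n Tt A' d' → A = A' ∧ d = d') :=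
  affine_orthogonal_group_as_stabilizer_general n Tt hTsym hTinv
end
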